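/- arXiv:2212.04659 — 10 statements merged into one kernel-verified Lean document; each statement's English description precedes it below -/
import Mathlib

section
/- If G is a k-vertex-critical graph (χ(G)=k and χ(G−v)<k for every vertex v) and M is a non-trivial module of G (a set M with 2 ≤ |M| < |V(G)| such that every vertex outside M is adjacent to all of M or to none of M), then the induced subgraph G[M] is m-vertex-critical for some m < k. -/
open SimpleGraph

/-- A graph is `k`-vertex-critical if its chromatic number is `k` and deleting
any vertex lowers the chromatic number. -/
def IsKVertexCritical {V : Type*} (G : SimpleGraph V) (k : ℕ) : Prop :=
  G.chromaticNumber = (k : ℕ∞) ∧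
    ∀ v : V, (G.induce {u | u ≠ v}).chromaticNumber < (k : ℕ∞)

/-- The clique number of a graph. -/
noncomputable def cliqueNum' {V : Type*} (G : SimpleGraph V) : ℕ :=
  sSup {n | ∃ s : Finset V, G.IsNClique n s}

/-- `G` has no induced subgraph isomorphic to `H`. -/
def IndFree {W V : Type*} (H : SimpleGraph W) (G : SimpleGraph V) : Prop :=
  ¬ ∃ s : Set V, Nonempty (H ≃g G.induce s)

def CompleteTo {V : Type*} (G : SimpleGraph V) (S T : Set V) : Prop :=
  ∀ s ∈ S, ∀ t ∈ T, G.Adj s t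

def AnticompleteTo {V : Type*} (G : SimpleGraph V) (S T : Set V) : Prop :=
  ∀ s ∈ S, ∀ t ∈ T, ¬ G.Adj s t

/-- `M` is a module of `G`: each outside vertex is complete or anticomplete to `M`. -/
def IsModule {V : Type*} (G : SimpleGraph V) (M : Set V) : Prop :=
  ∀ v ∉ M, (∀ m ∈ M, G.Adj v m) ∨ (∀ m ∈ M, ¬ G.Adj v m)

/-- A non-trivial module: a module `M` with `2 ≤ |M| < |V(G)|`. -/
def IsNontrivialModule {V : Type*} (G : SimpleGraph V) (M : Set V) : Prop :=
  IsModule G M ∧ 2 ≤ M.ncard ∧ M.ncard < Nat.card V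

/-- `G` is an expansion of `H` with parts `Q w`: parts are nonempty, partition `V(G)`,
are completely joined along edges of `H` and anticomplete along non-edges. -/
def IsExpansion {V W : Type*} (G : SimpleGraph V) (H : SimpleGraph W) (Q : W → Set V) : Prop :=
  (∀ w, (Q w).Nonempty) ∧
  (Pairwise fun w w' => Disjoint (Q w) (Q w')) ∧
  (∀ v, ∃ w, v ∈ Q w) ∧
  (∀ w w', H.Adj w w' → CompleteTo G (Q w) (Q w')) ∧
  (∀ w w', w ≠ w' → ¬ H.Adj w w' → AnticompleteTo G (Q w) (Q w'))

/-- The path on four vertices. -/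
def P4 : SimpleGraph (Fin 4) := SimpleGraph.pathGraph 4

/-- The path on five vertices. -/
def P5 : SimpleGraph (Fin 5) := SimpleGraph.pathGraph 5

/-- The gem: a `P₄` (0-1-2-3) plus a dominating vertex 4. -/
def gem : SimpleGraph (Fin 5) :=
  SimpleGraph.fromRel (fun a b =>
    (a, b) ∈ [((0 : Fin 5), (1 : Fin 5)), (1, 2), (2, 3), (4, 0), (4, 1), (4, 2), (4, 3)])

/-- The five-cycle. -/
def cycle5 : SimpleGraph (Fin 5) :=
  SimpleGraph.fromRel (fun a b =>
    (a, b) ∈ [((0 : Fin 5), (1 : Fin 5)), (1, 2), (2, 3), (3, 4), (4, 0)])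

/-!
Let `u ∈ M` and suppose deleting `u` does not lower `χ(G[M])`. Take an optimal coloring of `G - u`
and let `P` be the set of colors it uses on `M \ {u}`; then `|P| ≥ χ(G[M] - u) ≥ χ(G[M])`.
Every vertex outside `M` that has a neighbour in `M` is complete to `M`, so it avoids all colors
of `P`. Recoloring `M` with colors from `P` therefore yields a coloring of `G` with `χ(G - u)`
colors, contradicting criticality. Criticality applied to a vertex outside `M` also gives
`χ(G[M]) < k`.
-/

theorem SimpleGraph.nonempty_coloring_of_chromaticNumber_le {V W α : Type*} [Finite α]
    {G : SimpleGraph V} {H : SimpleGraph W} (h : G.chromaticNumber ≤ H.chromaticNumber)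
    (C : H.Coloring α) : Nonempty (G.Coloring α) := by
  have := Fintype.ofFinite α
  exact ⟨(chromaticNumber_le_iff_colorable.mp (h.trans C.colorable.chromaticNumber_le)).toColoring
    le_rfl⟩

section

variable {V : Type*} {G : SimpleGraph V} {M s : Set V}

theorem IsKVertexCritical.chromaticNumber_induce_lt {k : ℕ} (hG : IsKVertexCritical G k)
    (hs : s ≠ Set.univ) : (G.induce s).chromaticNumber < k := by
  obtain ⟨v, hv⟩ := (Set.ne_univ_iff_exists_notMem s).mp hs
  have hsv : s ⊆ {u | u ≠ v} := fun u hu huv => hv (huv ▸ hu)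
  exact (chromaticNumber_mono_of_hom (G.induceHomOfLE hsv).toHom).trans_lt (hG.2 v)

theorem IsModule.adj_of_adj (hM : IsModule G M) {v a b : V} (hv : v ∉ M) (ha : a ∈ M)
    (hb : b ∈ M) (hva : G.Adj v a) : G.Adj v b :=
  (hM v hv).elim (fun h => h b hb) (fun h => absurd hva (h a ha))

theorem IsModule.nonempty_coloring_of_coloring_induce {α : Type*} (hM : IsModule G M)
    (hs : Mᶜ ⊆ s) (C : (G.induce s).Coloring α) (D : (G.induce M).Coloring (C '' {x | ↑x ∈ M})) :
    Nonempty (G.Coloring α) := by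
  classical
  have across : ∀ {a b} (ha : a ∈ M) (hb : b ∉ M), G.Adj a b →
      (D ⟨a, ha⟩ : α) ≠ C ⟨b, hs hb⟩ := by
    intro a b ha hb hab
    obtain ⟨x, hxM, hx⟩ := (D ⟨a, ha⟩).2
    rw [← hx]
    exact C.valid (hM.adj_of_adj hb ha hxM hab.symm).symm
  refine ⟨Coloring.mk (fun v => if h : v ∈ M then D ⟨v, h⟩ else C ⟨v, hs h⟩) ?_⟩
  intro a b hab
  by_cases ha : a ∈ M <;> by_cases hb : b ∈ M <;>
    simp only [ha, hb, dif_pos, dif_neg, not_false_eq_true]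
  · exact fun h => D.valid (v := ⟨a, ha⟩) (w := ⟨b, hb⟩) hab (Subtype.ext h)
  · exact across ha hb hab
  · exact (across hb ha hab.symm).symm
  · exact C.valid hab

theorem IsModule.colorable_of_colorable_induce (hM : IsModule G M) (hs : Mᶜ ⊆ s)
    (hχ : (G.induce M).chromaticNumber ≤ (G.induce (M ∩ s)).chromaticNumber) {n : ℕ}
    (hn : (G.induce s).Colorable n) : G.Colorable n := by
  obtain ⟨C⟩ := hn
  let R : (G.induce (M ∩ s)).Coloring (C '' {x | ↑x ∈ M}) :=
    Coloring.mk (fun x => ⟨C ⟨x, x.2.2⟩, _, x.2.1, rfl⟩)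
      fun {x y} hxy h =>
        C.valid (v := ⟨x, x.2.2⟩) (w := ⟨y, y.2.2⟩) hxy (congrArg Subtype.val h)
  obtain ⟨D⟩ := nonempty_coloring_of_chromaticNumber_le hχ R
  exact hM.nonempty_coloring_of_coloring_induce hs C D

theorem IsModule.chromaticNumber_le_of_induce (hM : IsModule G M) (hs : Mᶜ ⊆ s)
    (hχ : (G.induce M).chromaticNumber ≤ (G.induce (M ∩ s)).chromaticNumber) :
    G.chromaticNumber ≤ (G.induce s).chromaticNumber :=
  chromaticNumber_le_of_forall_imp fun _ => hM.colorable_of_colorable_induce hs hχ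

theorem IsModule.chromaticNumber_induce_delete_lt (hM : IsModule G M) {u : M}
    (h : (G.induce {v | v ≠ ↑u}).chromaticNumber < G.chromaticNumber) :
    ((G.induce M).induce {x | x ≠ u}).chromaticNumber < (G.induce M).chromaticNumber := by
  by_contra! hle
  have hs : Mᶜ ⊆ {v | v ≠ ↑u} := fun v hv hvu => hv (hvu ▸ u.2)
  have hdel : ((G.induce M).induce {x | x ≠ u}).chromaticNumber ≤
      (G.induce (M ∩ {v | v ≠ ↑u})).chromaticNumber :=
    chromaticNumber_mono_of_hom <| induceHom (Embedding.induce M).toHom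
      fun x hx => ⟨x.2, fun hxu => hx (Subtype.ext hxu)⟩
  exact (hM.chromaticNumber_le_of_induce hs (hle.trans hdel)).not_gt h

end

theorem module_of_critical_is_critical_general {V : Type*} (G : SimpleGraph V) (k : ℕ)
    (M : Set V) (hG : IsKVertexCritical G k) (hM : IsNontrivialModule G M) :
    ∃ m : ℕ, m < k ∧ IsKVertexCritical (G.induce M) m := by
  obtain ⟨hmod, -, hlt⟩ := hM
  have hMk : (G.induce M).chromaticNumber < k :=
    hG.chromaticNumber_induce_lt (by rintro rfl; exact hlt.ne (Set.ncard_univ V))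
  obtain ⟨m, hm⟩ := ENat.ne_top_iff_exists.mp (hMk.trans_le le_top).ne
  rw [← hm] at hMk
  exact ⟨m, by exact_mod_cast hMk, hm.symm,
    fun u => hm ▸ hmod.chromaticNumber_induce_delete_lt (hG.1 ▸ hG.2 u)⟩

/-- a non-trivial module of a `k`-vertex-critical graph induces an
`m`-vertex-critical graph for some `m < k`. -/
theorem module_of_critical_is_critical {V : Type*} [Fintype V] (G : SimpleGraph V) (k : ℕ)
    (M : Set V) (hG : IsKVertexCritical G k) (hM : IsNontrivialModule G M) :
    ∃ m : ℕ, m < k ∧ IsKVertexCritical (G.induce M) m :=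
  module_of_critical_is_critical_general G k M hG hM
end

section
/- Let G be a graph containing two disjoint cliques A = {a_1,…,a_m} and B = {b_1,…,b_m} such that for each i, every neighbour of a_i outside A is also a neighbour of b_i outside B (i.e., N(a_i)∖A ⊆ N(b_i)∖B). Then for every k, G is not k-vertex-critical. -/
open SimpleGraph

/-!
If `b i` sees every neighbour of `a i` outside `A`, then sending each `a i` to `b i` and fixing
every other vertex is an endomorphism of `G` (adjacent vertices of `A` go to distinct, hence
adjacent, vertices of the clique `B`). Its image misses `a i`, so any colouring of `G - a i`
pulls back to a colouring of `G` with the same colours, and `G` is not vertex-critical.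
-/

namespace SimpleGraph

variable {V : Type*} {G : SimpleGraph V}

theorem not_isKVertexCritical_of_hom_avoiding (f : G →g G) {v : V} (hv : ∀ u, f u ≠ v)
    (k : ℕ) : ¬ IsKVertexCritical G k := by
  rintro ⟨hχ, hdel⟩
  let f' : G →g G.induce {u | u ≠ v} := ⟨fun u => ⟨f u, hv u⟩, f.map_adj⟩
  have := (chromaticNumber_mono_of_hom f').trans_lt (hdel v)
  exact this.ne hχ

section ReplaceClique

variable {ι : Type*} (a b : ι → V)

open Classical in
theorem extend_id_eq_or (u : V) :
    (∃ i, a i = u ∧ Function.extend a b id u = b i) ∨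
      (u ∉ Set.range a ∧ Function.extend a b id u = u) := by
  rw [Function.extend_def]
  split_ifs with h
  · exact Or.inl ⟨h.choose, h.choose_spec, rfl⟩
  · exact Or.inr ⟨h, rfl⟩

variable {a b}

noncomputable def Hom.replaceClique (hb : Function.Injective b) (hB : G.IsClique (Set.range b))
    (hsub : ∀ i v, G.Adj (a i) v → v ∉ Set.range a → G.Adj (b i) v) : G →g G where
  toFun := Function.extend a b id
  map_rel' {u v} huv := by
    rcases extend_id_eq_or a b u with ⟨i, rfl, hu⟩ | ⟨hu, hu'⟩ <;>
      rcases extend_id_eq_or a b v with ⟨j, rfl, hv⟩ | ⟨hv, hv'⟩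
    · rw [hu, hv]
      exact hB ⟨i, rfl⟩ ⟨j, rfl⟩ (hb.ne fun hij => huv.ne (congrArg a hij))
    · rw [hu, hv']
      exact hsub i v huv hv
    · rw [hu', hv]
      exact (hsub j u huv.symm hu).symm
    · rwa [hu', hv']

theorem Hom.replaceClique_ne (hb : Function.Injective b) (hB : G.IsClique (Set.range b))
    (hsub : ∀ i v, G.Adj (a i) v → v ∉ Set.range a → G.Adj (b i) v)
    (hdisj : Disjoint (Set.range a) (Set.range b)) (i : ι) (u : V) :
    Hom.replaceClique hb hB hsub u ≠ a i := by
  change Function.extend a b id u ≠ a i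
  rcases extend_id_eq_or a b u with ⟨j, -, hu⟩ | ⟨hu, hu'⟩
  · rw [hu]
    exact fun h => Set.disjoint_right.mp hdisj ⟨j, rfl⟩ ⟨i, h.symm⟩
  · rw [hu']
    exact fun h => hu ⟨i, h.symm⟩

end ReplaceClique

end SimpleGraph

theorem not_critical_of_similar_cliques_general {V : Type*} (G : SimpleGraph V) (m : ℕ) (hm : 0 < m)
    (a b : Fin m → V) (hb : Function.Injective b)
    (hdisj : Disjoint (Set.range a) (Set.range b))
    (hB : G.IsClique (Set.range b))
    (hsub : ∀ i : Fin m, ∀ v : V, G.Adj (a i) v → v ∉ Set.range a →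
      G.Adj (b i) v ∧ v ∉ Set.range b) :
    ∀ k : ℕ, ¬ IsKVertexCritical G k :=
  have hsub' : ∀ i v, G.Adj (a i) v → v ∉ Set.range a → G.Adj (b i) v :=
    fun i v hav hv => (hsub i v hav hv).1
  not_isKVertexCritical_of_hom_avoiding (Hom.replaceClique hb hB hsub')
    (Hom.replaceClique_ne hb hB hsub' hdisj ⟨0, hm⟩)

/-- Lemma 3.1 of Hoàng et al.: if `G` has two disjoint cliques
`A = {a 1, …, a m}` and `B = {b 1, …, b m}` with `N(a i) \ A ⊆ N(b i) \ B` for all `i`,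
then `G` is not `k`-vertex-critical for any `k`. -/
theorem not_critical_of_similar_cliques {V : Type*} (G : SimpleGraph V) (m : ℕ) (hm : 0 < m)
    (a b : Fin m → V) (ha : Function.Injective a) (hb : Function.Injective b)
    (hdisj : Disjoint (Set.range a) (Set.range b))
    (hA : G.IsClique (Set.range a)) (hB : G.IsClique (Set.range b))
    (hsub : ∀ i : Fin m, ∀ v : V, G.Adj (a i) v → v ∉ Set.range a →
      G.Adj (b i) v ∧ v ∉ Set.range b) :
    ∀ k : ℕ, ¬ IsKVertexCritical G k :=
  not_critical_of_similar_cliques_general G m hm a b hb hdisj hB hsub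
end

section
/- Let G be a graph whose vertex set is partitioned into five nonempty cliques Q_1,…,Q_5 such that Q_i is complete to Q_{i+1} (indices mod 5, so Q_5 complete to Q_1) and Q_i is anticomplete to Q_{i+2} and Q_{i+3} for all i (i.e., G is a clique expansion of the 5-cycle C_5). If G has n vertices, then χ(G) = max(ω(G), ⌈n/2⌉). -/
open SimpleGraph

lemma arith5 (q0 q1 q2 q3 q4 k : ℕ) (h01 : q0+q1 ≤ k) (h12 : q1+q2 ≤ k)
    (h23 : q2+q3 ≤ k) (h34 : q3+q4 ≤ k) (h40 : q4+q0 ≤ k)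
    (hs : q0+q1+q2+q3+q4 ≤ 2*k) :
    ∃ s0 s1 s2 s3 s4 : ℕ, q0 ≤ s0+s3 ∧ q1 ≤ s1+s4 ∧ q2 ≤ s2+s0 ∧ q3 ≤ s3+s1 ∧
      q4 ≤ s4+s2 ∧ s0+s1+s2+s3+s4 ≤ k := by
  refine ⟨min q0 (((q0+q1+q2) - (q3+q4) + 1)/2),
    q1 - (q4 - (q2 - min q0 (((q0+q1+q2) - (q3+q4) + 1)/2))),
    q2 - min q0 (((q0+q1+q2) - (q3+q4) + 1)/2),
    max (q3 - (q1 - (q4 - (q2 - min q0 (((q0+q1+q2) - (q3+q4) + 1)/2)))))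
        (q0 - min q0 (((q0+q1+q2) - (q3+q4) + 1)/2)),
    q4 - (q2 - min q0 (((q0+q1+q2) - (q3+q4) + 1)/2)), ?_, ?_, ?_, ?_, ?_, ?_⟩ <;> omega

/-- for a clique expansion `G` of `C₅` with parts `Q i` (indices mod 5),
`χ(G) = max (ω(G), ⌈n/2⌉)`. -/
theorem chromaticNumber_of_C5_clique_expansion {V : Type*} [Fintype V] (G : SimpleGraph V)
    (Q : ZMod 5 → Set V)
    (hne : ∀ i, (Q i).Nonempty)
    (hdisj : ∀ i j, i ≠ j → Disjoint (Q i) (Q j))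
    (hcover : ∀ v : V, ∃ i, v ∈ Q i)
    (hclique : ∀ i, G.IsClique (Q i))
    (hcomp : ∀ i, CompleteTo G (Q i) (Q (i + 1)))
    (hanti2 : ∀ i, AnticompleteTo G (Q i) (Q (i + 2)))
    (hanti3 : ∀ i, AnticompleteTo G (Q i) (Q (i + 3))) :
    G.chromaticNumber = ((max (cliqueNum' G) ((Fintype.card V + 1) / 2) : ℕ) : ℕ∞) := by
  classical
  set k := max (cliqueNum' G) ((Fintype.card V + 1) / 2) with hkdef
  choose part hpart using hcover
  have hpart_uniq : ∀ v i, v ∈ Q i → part v = i := by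
    intro v i hv
    by_contra h
    exact Set.disjoint_left.1 (hdisj _ _ h) (hpart v) hv
  -- two nonadjacent distinct vertices lie in parts at distance 2 on the pentagon
  have hzcases : ∀ i j : ZMod 5, i ≠ j → j = i+1 ∨ j = i+2 ∨ j = i+3 ∨ j = i+4 := by decide
  have key : ∀ a b : V, ¬ G.Adj a b → a ≠ b →
      part b = part a + 2 ∨ part b = part a + 3 := by
    intro a b hnadj hab
    have hij : part a ≠ part b := by
      intro h
      exact hnadj ((hclique (part a)) (hpart a) (h ▸ hpart b) hab)
    rcases hzcases _ _ hij with h1 | h2 | h3 | h4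
    · exact absurd (hcomp (part a) a (hpart a) b (h1 ▸ hpart b)) hnadj
    · exact Or.inl h2
    · exact Or.inr h3
    · have h1' : part a = part b + 1 := by
        rw [h4]; have : ∀ x : ZMod 5, x = x + 4 + 1 := by decide
        exact this _
      exact absurd ((hcomp (part b) b (hpart b) a (h1' ▸ hpart a)).symm) hnadj
  -- independent sets have size at most 2
  have indep2 : ∀ s : Finset V, (∀ a ∈ s, ∀ b ∈ s, a ≠ b → ¬ G.Adj a b) → s.card ≤ 2 := by
    intro s hs
    by_contra h
    push_neg at h
    obtain ⟨a, b, c, ha, hb, hc, hab, hac, hbc⟩ := Finset.two_lt_card_iff.1 h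
    have h1 := key a b (hs a ha b hb hab) hab
    have h2 := key a c (hs a ha c hc hac) hac
    have h3 := key b c (hs b hb c hc hbc) hbc
    have : ∀ x y z : ZMod 5, (y = x+2 ∨ y = x+3) → (z = x+2 ∨ z = x+3) →
        (z = y+2 ∨ z = y+3) → False := by decide
    exact this _ _ _ h1 h2 h3
  -- any m-coloring satisfies card V ≤ 2 * m
  have hcard_le : ∀ m : ℕ, G.Colorable m → Fintype.card V ≤ 2 * m := by
    intro m hcol
    have C := hcol.some
    have hfib := Finset.card_eq_sum_card_fiberwise
      (f := fun v => C v) (s := Finset.univ) (t := Finset.univ) (fun v _ => Finset.mem_univ _)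
    rw [Finset.card_univ] at hfib
    rw [hfib]
    calc ∑ c : Fin m, (Finset.univ.filter (fun v => C v = c)).card
        ≤ ∑ _c : Fin m, 2 := by
          apply Finset.sum_le_sum
          intro c _
          apply indep2
          intro a ha b hb hab hadj
          have := C.valid hadj
          simp only [Finset.mem_filter] at ha hb
          exact this (ha.2.trans hb.2.symm)
      _ = 2 * m := by simp [Nat.mul_comm]
  -- finset version of the parts
  set Qf : ZMod 5 → Finset V := fun i => Finset.univ.filter (fun v => part v = i) with hQfdef
  have hQfmem : ∀ v i, v ∈ Qf i ↔ part v = i := by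
    intro v i; simp [hQfdef]
  set q : ZMod 5 → ℕ := fun i => (Qf i).card with hqdef
  have hsum : ∑ i : ZMod 5, q i = Fintype.card V := by
    rw [← Finset.card_univ]
    exact (Finset.card_eq_sum_card_fiberwise (f := part) (s := Finset.univ)
      (t := Finset.univ) (fun v _ => Finset.mem_univ _)).symm
  have hmemQ : ∀ v i, v ∈ Qf i → v ∈ Q i := by
    intro v i hv
    have := (hQfmem v i).1 hv
    exact this ▸ hpart v
  -- clique bound : q i + q (i+1) ≤ k
  have hqk : ∀ i : ZMod 5, q i + q (i+1) ≤ k := by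
    intro i
    have hii : i ≠ i + 1 := by
      have : ∀ x : ZMod 5, x ≠ x + 1 := by decide
      exact this i
    have hdisjf : Disjoint (Qf i) (Qf (i+1)) := by
      rw [Finset.disjoint_left]
      intro v hv hv'
      exact hii (((hQfmem v i).1 hv).symm.trans ((hQfmem v (i+1)).1 hv'))
    have hcl : G.IsClique ↑(Qf i ∪ Qf (i+1)) := by
      intro a ha b hb hab
      simp only [Finset.coe_union, Set.mem_union, Finset.mem_coe] at ha hb
      rcases ha with ha | ha <;> rcases hb with hb | hb
      · exact (hclique i) (hmemQ a i ha) (hmemQ b i hb) hab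
      · exact hcomp i a (hmemQ a i ha) b (hmemQ b _ hb)
      · exact (hcomp i b (hmemQ b i hb) a (hmemQ a _ ha)).symm
      · exact (hclique (i+1)) (hmemQ a _ ha) (hmemQ b _ hb) hab
    have hcard : (Qf i ∪ Qf (i+1)).card = q i + q (i+1) :=
      Finset.card_union_of_disjoint hdisjf
    have : (Qf i ∪ Qf (i+1)).card ≤ cliqueNum' G := by
      have : cliqueNum' G = G.cliqueNum := rfl
      rw [this]
      exact IsClique.card_le_cliqueNum (tc := hcl)
    calc q i + q (i+1) = (Qf i ∪ Qf (i+1)).card := hcard.symm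
      _ ≤ cliqueNum' G := this
      _ ≤ k := le_max_left _ _
  -- expanded sum
  have hsum5 : q 0 + q 1 + q 2 + q 3 + q 4 = Fintype.card V := by
    rw [← hsum]
    rw [show (Finset.univ : Finset (ZMod 5)) =
      insert 0 (insert 1 (insert 2 (insert 3 {4}))) from by decide]
    rw [Finset.sum_insert (by decide), Finset.sum_insert (by decide),
        Finset.sum_insert (by decide), Finset.sum_insert (by decide), Finset.sum_singleton]
    omega
  have h2k : q 0 + q 1 + q 2 + q 3 + q 4 ≤ 2 * k := by
    have : (Fintype.card V + 1) / 2 ≤ k := le_max_right _ _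
    omega
  obtain ⟨s0, s1, s2, s3, s4, c0, c1, c2, c3, c4, hsk⟩ :=
    arith5 (q 0) (q 1) (q 2) (q 3) (q 4) k
      (by have := hqk 0; rwa [show ((0:ZMod 5)+1 = 1) from by decide] at this)
      (by have := hqk 1; rwa [show ((1:ZMod 5)+1 = 2) from by decide] at this)
      (by have := hqk 2; rwa [show ((2:ZMod 5)+1 = 3) from by decide] at this)
      (by have := hqk 3; rwa [show ((3:ZMod 5)+1 = 4) from by decide] at this)
      (by have := hqk 4; rwa [show ((4:ZMod 5)+1 = 0) from by decide] at this)
      h2k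
  set x : ZMod 5 → ℕ := fun i => if i = 0 then s0 else if i = 1 then s1 else
    if i = 2 then s2 else if i = 3 then s3 else s4 with hxdef
  have hx0 : x 0 = s0 := by
    rw [hxdef]
    show (if (0:ZMod 5) = 0 then s0 else if (0:ZMod 5) = 1 then s1 else
      if (0:ZMod 5) = 2 then s2 else if (0:ZMod 5) = 3 then s3 else s4) = s0
    rw [if_pos rfl]
  have hx1 : x 1 = s1 := by
    rw [hxdef]
    show (if (1:ZMod 5) = 0 then s0 else if (1:ZMod 5) = 1 then s1 else
      if (1:ZMod 5) = 2 then s2 else if (1:ZMod 5) = 3 then s3 else s4) = s1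
    rw [if_neg (by decide), if_pos rfl]
  have hx2 : x 2 = s2 := by
    rw [hxdef]
    show (if (2:ZMod 5) = 0 then s0 else if (2:ZMod 5) = 1 then s1 else
      if (2:ZMod 5) = 2 then s2 else if (2:ZMod 5) = 3 then s3 else s4) = s2
    rw [if_neg (by decide), if_neg (by decide), if_pos rfl]
  have hx3 : x 3 = s3 := by
    rw [hxdef]
    show (if (3:ZMod 5) = 0 then s0 else if (3:ZMod 5) = 1 then s1 else
      if (3:ZMod 5) = 2 then s2 else if (3:ZMod 5) = 3 then s3 else s4) = s3
    rw [if_neg (by decide), if_neg (by decide), if_neg (by decide), if_pos rfl]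
  have hx4 : x 4 = s4 := by
    rw [hxdef]
    show (if (4:ZMod 5) = 0 then s0 else if (4:ZMod 5) = 1 then s1 else
      if (4:ZMod 5) = 2 then s2 else if (4:ZMod 5) = 3 then s3 else s4) = s4
    rw [if_neg (by decide), if_neg (by decide), if_neg (by decide), if_neg (by decide)]
  have hc5 : ∀ j : ZMod 5, j = 0 ∨ j = 1 ∨ j = 2 ∨ j = 3 ∨ j = 4 := by decide
  have hxq : ∀ j : ZMod 5, q j ≤ x j + x (j+3) := by
    intro j
    rcases hc5 j with rfl | rfl | rfl | rfl | rfl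
    · rw [show ((0:ZMod 5)+3 = 3) from by decide, hx0, hx3]; omega
    · rw [show ((1:ZMod 5)+3 = 4) from by decide, hx1, hx4]; omega
    · rw [show ((2:ZMod 5)+3 = 0) from by decide, hx2, hx0]; omega
    · rw [show ((3:ZMod 5)+3 = 1) from by decide, hx3, hx1]; omega
    · rw [show ((4:ZMod 5)+3 = 2) from by decide, hx4, hx2]; omega
  have hxsum : ∑ i : ZMod 5, x i ≤ k := by
    rw [show (Finset.univ : Finset (ZMod 5)) =
      insert 0 (insert 1 (insert 2 (insert 3 {4}))) from by decide]
    rw [Finset.sum_insert (by decide), Finset.sum_insert (by decide),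
        Finset.sum_insert (by decide), Finset.sum_insert (by decide), Finset.sum_singleton]
    rw [hx0, hx1, hx2, hx3, hx4]
    omega
  -- blocks of colors
  set off : ZMod 5 → ℕ :=
    fun i => ∑ j ∈ Finset.univ.filter (fun j : ZMod 5 => j.val < i.val), x j with hoffdef
  have hoff_eq : ∀ i, off i + x i =
      ∑ j ∈ insert i (Finset.univ.filter (fun j : ZMod 5 => j.val < i.val)), x j := by
    intro i
    rw [Finset.sum_insert (by simp), hoffdef]
    ring
  have hoff_le : ∀ i, off i + x i ≤ k := by
    intro i
    refine le_trans ?_ hxsum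
    rw [hoff_eq]
    exact Finset.sum_le_sum_of_subset (Finset.subset_univ _)
  have hoff_mono : ∀ i j : ZMod 5, i.val < j.val → off i + x i ≤ off j := by
    intro i j h
    rw [hoff_eq]
    apply Finset.sum_le_sum_of_subset
    intro u hu
    simp only [Finset.mem_insert, Finset.mem_filter, Finset.mem_univ, true_and] at hu ⊢
    rcases hu with rfl | hu
    · exact h
    · omega
  have hblock : ∀ i j : ZMod 5, i ≠ j → ∀ a b : ℕ, a < x i → b < x j →
      off i + a ≠ off j + b := by
    intro i j hij a b ha hb
    have hv : i.val ≠ j.val := fun hv => hij (ZMod.val_injective _ hv)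
    rcases Nat.lt_or_ge i.val j.val with h | h
    · have := hoff_mono i j h; omega
    · have := hoff_mono j i (by omega); omega
  -- ranks inside each part
  set e := Fintype.equivFin V with hedef
  set rk : V → ℕ := fun v => ((Qf (part v)).filter (fun u => e u < e v)).card with hrkdef
  have hrk_lt : ∀ v, rk v < q (part v) := by
    intro v
    apply Finset.card_lt_card
    rw [Finset.ssubset_iff_of_subset (Finset.filter_subset _ _)]
    exact ⟨v, (hQfmem v _).2 rfl, by simp⟩
  have hrk_mono : ∀ v w, part v = part w → e v < e w → rk v < rk w := by
    intro v w hp hvw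
    have hsub : (Qf (part v)).filter (fun u => e u < e v) ⊆
        (Qf (part w)).filter (fun u => e u < e w) := by
      intro u hu
      simp only [Finset.mem_filter] at hu ⊢
      exact ⟨hp ▸ hu.1, lt_trans hu.2 hvw⟩
    apply Finset.card_lt_card
    rw [Finset.ssubset_iff_of_subset hsub]
    exact ⟨v, Finset.mem_filter.2 ⟨(hQfmem v _).2 hp, hvw⟩, by simp⟩
  have hrk_ne : ∀ v w, part v = part w → v ≠ w → rk v ≠ rk w := by
    intro v w hp hvw
    rcases lt_trichotomy (e v) (e w) with h | h | h
    · exact Nat.ne_of_lt (hrk_mono v w hp h)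
    · exact absurd (e.injective h) hvw
    · exact (Nat.ne_of_lt (hrk_mono w v hp.symm h)).symm
  -- the coloring
  set col : V → ℕ := fun v => if rk v < x (part v) then off (part v) + rk v
    else off (part v + 3) + (rk v - x (part v)) with hcoldef
  have hne3 : ∀ t : ZMod 5, t ≠ t + 3 := by decide
  have hcol_lt : ∀ v, col v < k := by
    intro v
    rw [hcoldef]; dsimp only
    split_ifs with h
    · have := hoff_le (part v); omega
    · have h1 := hrk_lt v
      have h2 := hxq (part v)
      have := hoff_le (part v + 3)
      omega
  have hcol_ne_same : ∀ v w : V, part v = part w → v ≠ w → col v ≠ col w := by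
    intro v w hp hvw
    have hr := hrk_ne v w hp hvw
    have hw1 : rk w < q (part v) := hp ▸ hrk_lt w
    have hv1 := hrk_lt v
    have hq1 := hxq (part v)
    rw [hcoldef]; dsimp only
    rw [← hp]
    split_ifs with h1 h2 h2
    · omega
    · exact hblock (part v) (part v + 3) (hne3 _) _ _ h1 (by omega)
    · exact (hblock (part v) (part v + 3) (hne3 _) _ _ h2 (by omega)).symm
    · omega
  have hcol_ne_diff : ∀ v w : V, G.Adj v w → part v ≠ part w → col v ≠ col w := by
    intro v w hadj hpne
    have hb : part w = part v + 1 ∨ part w = part v + 4 := by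
      rcases hzcases _ _ hpne with h | h | h | h
      · exact Or.inl h
      · exact absurd hadj (hanti2 (part v) v (hpart v) w (h ▸ hpart w))
      · exact absurd hadj (hanti3 (part v) v (hpart v) w (h ▸ hpart w))
      · exact Or.inr h
    have hnA : ∀ t : ZMod 5, t ≠ t + 1 := by decide
    have hnB : ∀ t : ZMod 5, t ≠ t + 1 + 3 := by decide
    have hnC : ∀ t : ZMod 5, t + 3 ≠ t + 1 := by decide
    have hnD : ∀ t : ZMod 5, t + 3 ≠ t + 1 + 3 := by decide
    have hnE : ∀ t : ZMod 5, t ≠ t + 4 := by decide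
    have hnF : ∀ t : ZMod 5, t ≠ t + 4 + 3 := by decide
    have hnG : ∀ t : ZMod 5, t + 3 ≠ t + 4 := by decide
    have hnH : ∀ t : ZMod 5, t + 3 ≠ t + 4 + 3 := by decide
    have hv1 := hrk_lt v
    have hqv := hxq (part v)
    rw [hcoldef]; dsimp only
    rcases hb with hb | hb
    · have hw1 : rk w < q (part v + 1) := by rw [← hb]; exact hrk_lt w
      have hqw := hxq (part v + 1)
      rw [hb]
      split_ifs with h1 h2 h2
      · exact hblock _ _ (hnA _) _ _ h1 h2
      · exact hblock _ _ (hnB _) _ _ h1 (by omega)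
      · exact hblock _ _ (hnC _) _ _ (by omega) h2
      · exact hblock _ _ (hnD _) _ _ (by omega) (by omega)
    · have hw1 : rk w < q (part v + 4) := by rw [← hb]; exact hrk_lt w
      have hqw := hxq (part v + 4)
      rw [hb]
      split_ifs with h1 h2 h2
      · exact hblock _ _ (hnE _) _ _ h1 h2
      · exact hblock _ _ (hnF _) _ _ h1 (by omega)
      · exact hblock _ _ (hnG _) _ _ (by omega) h2
      · exact hblock _ _ (hnH _) _ _ (by omega) (by omega)
  have hcolorable : G.Colorable k := by
    rw [colorable_iff_exists_bdd_nat_coloring]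
    refine ⟨Coloring.mk col ?_, hcol_lt⟩
    intro v w hadj
    by_cases hp : part v = part w
    · exact hcol_ne_same v w hp (G.ne_of_adj hadj)
    · exact hcol_ne_diff v w hadj hp
  have hle : G.chromaticNumber ≤ (k : ℕ∞) := hcolorable.chromaticNumber_le
  refine le_antisymm hle ?_
  obtain ⟨m, hm⟩ : ∃ m : ℕ, G.chromaticNumber = (m : ℕ∞) := by
    refine ⟨(G.chromaticNumber).toNat, (ENat.coe_toNat ?_).symm⟩
    intro h
    rw [h] at hle
    exact (ENat.coe_ne_top k) (top_le_iff.1 hle)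
  rw [hm, Nat.cast_le]
  have hcolm : G.Colorable m := chromaticNumber_le_iff_colorable.1 (le_of_eq hm)
  have h1 : cliqueNum' G ≤ m := by
    obtain ⟨s, hs⟩ := G.exists_isNClique_cliqueNum
    have hsc := hs.1.card_le_of_colorable hcolm
    rw [hs.2] at hsc
    exact hsc
  have h2 : (Fintype.card V + 1) / 2 ≤ m := by
    have := hcard_le m hcolm
    omega
  exact max_le h1 h2
end

section
/- There is no k-vertex-critical graph, for any k, among the P_4-free expansions of the graph G_2, where G_2 is the graph on vertices v_1,…,v_6 with edge set {v_1v_2, v_1v_5, v_1v_6, v_2v_3, v_3v_4, v_3v_6, v_4v_5, v_4v_6}. In particular, if G is obtained from G_2 by replacing each vertex v_i by a nonempty P_4-free graph Q_i, joining Q_i completely to Q_j exactly when v_iv_j ∈ E(G_2), then G is not k-vertex-critical for any k. -/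
open SimpleGraph

/-- The graph `G₂` of the structure theorem (vertices `v₁,…,v₆` are `0,…,5`). -/
def graphG2 : SimpleGraph (Fin 6) :=
  SimpleGraph.fromRel (fun a b =>
    (a, b) ∈ [((0 : Fin 6), (1 : Fin 6)), (0, 4), (0, 5), (1, 2), (2, 3), (2, 5), (3, 4), (3, 5)])

/-!
Each part `Q i` is `P₄`-free, hence weakly perfect: it contains a clique `K i` whose size `a i`
suffices to colour it. If `G` were `(M + 1)`-vertex-critical, deleting a vertex of `Q 1`
(resp. `Q 5`) would leave an `M`-colourable graph containing the cliques `K 2 ∪ K 3 ∪ K 5`,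
`K 0 ∪ K 5`, `K 0 ∪ K 4`, `K 3 ∪ K 4` (resp. `K 0 ∪ K 1`, `K 1 ∪ K 2`) and the blown-up
five-cycle on `K 0, …, K 4`, whose independence number is `2`. These bounds on the `a i` are
exactly what is needed to colour `G₂`, with vertex `i` receiving `a i` colours, from `M` colours,
and then `G` itself is `M`-colourable, a contradiction.
-/

open Finset

namespace SimpleGraph

variable {V : Type*} {G : SimpleGraph V}

theorem IsIndepSet.colorable_succ {s : Set V} {n : ℕ} (hs : G.IsIndepSet s)
    (h : (G.induce sᶜ).Colorable n) : G.Colorable (n + 1) := by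
  classical
  obtain ⟨C⟩ := h
  refine ⟨Coloring.mk (fun v => if hv : v ∈ s then Fin.last n else (C ⟨v, hv⟩).castSucc) ?_⟩
  intro u v huv
  by_cases hu : u ∈ s <;> by_cases hv : v ∈ s <;> simp only [hu, hv, dite_true, dite_false]
  · exact absurd huv (hs hu hv huv.ne)
  · exact (Fin.castSucc_ne_last _).symm
  · exact Fin.castSucc_ne_last _
  · exact fun h => C.valid (G.induce_adj.mpr huv) (Fin.castSucc_injective _ h)

theorem IsClique.map_subtype {s : Set V} {K : Finset s} (hK : (G.induce s).IsClique K) :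
    G.IsClique (K.map (Function.Embedding.subtype (· ∈ s))) := by
  simpa [isClique_induce_iff] using hK

theorem Colorable.card_le_mul {M r : ℕ} (hcol : G.Colorable M) {U : Finset V}
    (hU : ∀ I ⊆ U, G.IsIndepSet I → #I ≤ r) : #U ≤ r * M := by
  classical
  obtain ⟨C⟩ := hcol
  simpa using card_le_mul_card_image_of_maps_to (f := C) (t := univ) (fun _ _ => mem_univ _) r
    fun b _ => hU _ (filter_subset _ _) fun x hx y hy _ hadj =>
      C.valid hadj ((mem_filter.mp hx).2.trans (mem_filter.mp hy).2.symm)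

theorem card_le_mul_of_induce_colorable {s : Set V} {M r : ℕ} (hcol : (G.induce s).Colorable M)
    {U : Finset V} (hUs : ↑U ⊆ s) (hU : ∀ I ⊆ U, G.IsIndepSet I → #I ≤ r) : #U ≤ r * M := by
  classical
  have key := hcol.card_le_mul (U := U.subtype (· ∈ s)) (r := r) fun I hI hind => by
    rw [← card_map (Function.Embedding.subtype _)]
    refine hU _ (fun x hx => ?_) fun x hx y hy hxy => ?_
    · obtain ⟨x', hx', rfl⟩ := mem_map.mp hx
      simpa using hI hx'
    · obtain ⟨x', hx', rfl⟩ := mem_map.mp hx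
      obtain ⟨y', hy', rfl⟩ := mem_map.mp hy
      exact hind hx' hy' fun h => hxy (congrArg _ h)
  rwa [card_subtype, filter_true_of_mem fun x hx => hUs hx] at key

/-- `f` properly colours, with colours below `M`, the graph obtained from `H` by replacing each
vertex `w` with a clique on `{0, …, a w - 1}`. -/
structure IsWeightedColoring {W : Type*} (H : SimpleGraph W) (a : W → ℕ) (M : ℕ)
    (f : W → ℕ → ℕ) : Prop where
  lt : ∀ w, ∀ x < a w, f w x < M
  injOn : ∀ w, Set.InjOn (f w) (Set.Iio (a w))
  ne_of_adj : ∀ w w', H.Adj w w' → ∀ x < a w, ∀ y < a w', f w x ≠ f w' y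

end SimpleGraph

section P4Free

variable {V : Type*} {G : SimpleGraph V}

theorem P4_isIndContained_of_adj {a b c d : V} (hab : G.Adj a b) (hbc : G.Adj b c)
    (hcd : G.Adj c d) (hac : ¬ G.Adj a c) (hbd : ¬ G.Adj b d) (had : ¬ G.Adj a d) : P4 ⊴ G := by
  have hca : c ≠ a := by rintro rfl; exact had hcd
  have hdb : d ≠ b := by rintro rfl; exact had hab
  have hda : d ≠ a := by rintro rfl; exact hbd hab.symm
  refine ⟨⟨⟨![a, b, c, d], fun i j h => ?_⟩, fun {i j} => ?_⟩⟩
  · fin_cases i <;> fin_cases j <;> simp_all [hab.ne, hbc.ne, hcd.ne, hab.ne', hbc.ne', hcd.ne']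
  · change G.Adj (![a, b, c, d] i) (![a, b, c, d] j) ↔ _
    fin_cases i <;> fin_cases j <;> simp_all [P4, pathGraph_adj, adj_comm]

/-- Otherwise a vertex `s ∈ S` with the most neighbours in `K`, a non-neighbour `u ∈ K` of `s`,
a neighbour `t ∈ S` of `u` and a vertex of `K` seen by `s` but not by `t` induce a `P₄`. -/
theorem exists_forall_adj_of_not_P4_isIndContained (hG : ¬ P4 ⊴ G) {S K : Finset V}
    (hS : G.IsIndepSet S) (hSdom : ∀ v ∉ S, ∃ u ∈ S, G.Adj v u) (hSne : S.Nonempty)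
    (hK : G.IsClique K) (hKS : Disjoint K S) : ∃ x ∈ S, ∀ y ∈ K, G.Adj x y := by
  classical
  obtain ⟨s, hs, hmax⟩ := S.exists_max_image (fun x => #{y ∈ K | G.Adj x y}) hSne
  refine ⟨s, hs, fun u hu => ?_⟩
  by_contra hsu
  obtain ⟨t, ht, hut⟩ := hSdom u (Finset.disjoint_left.mp hKS hu)
  obtain ⟨w, hw, hsw, htw⟩ : ∃ w ∈ K, G.Adj s w ∧ ¬ G.Adj t w := by
    by_contra! h
    have hsub : {y ∈ K | G.Adj s y} ⊂ {y ∈ K | G.Adj t y} :=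
      (ssubset_iff_of_subset (monotone_filter_right K (h · ·))).mpr
        ⟨u, mem_filter.mpr ⟨hu, hut.symm⟩, fun hu' => hsu (mem_filter.mp hu').2⟩
    exact (hmax t ht).not_gt (card_lt_card hsub)
  have hts : t ≠ s := by rintro rfl; exact htw hsw
  exact hG (P4_isIndContained_of_adj hut.symm (hK hu hw (by rintro rfl; exact hsu hsw)) hsw.symm
    htw (fun h => hsu h.symm) (hS ht hs hts))

/-- A maximum independent set `S` dominates `G`, so one of its vertices extends the clique that
induction provides for `G - S`. -/
theorem exists_isClique_colorable_card_of_not_P4_isIndContained [Finite V] (hG : ¬ P4 ⊴ G) :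
    ∃ K : Finset V, G.IsClique K ∧ G.Colorable #K := by
  induction h : Nat.card V using Nat.strong_induction_on generalizing V with
  | _ n ih =>
  classical
  cases isEmpty_or_nonempty V
  · exact ⟨∅, by simp, .of_isEmpty 0⟩
  obtain ⟨S, hS⟩ := G.maximumIndepSet_exists
  obtain ⟨v₀⟩ := ‹Nonempty V›
  have hSne : S.Nonempty := card_pos.mp <| (hS.maximum {v₀} (by simp)).trans_lt' (by simp)
  have hSdom : ∀ v ∉ S, ∃ u ∈ S, G.Adj v u := by
    intro v hv
    by_contra! h
    have hind : G.IsIndepSet ↑(insert v S) := by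
      rw [coe_insert]
      exact hS.isIndepSet.insert fun u hu _ => ⟨h u hu, fun h' => h u hu h'.symm⟩
    exact absurd (hS.maximum _ hind) (by simp [card_insert_of_notMem hv])
  obtain ⟨v₁, hv₁⟩ := hSne
  obtain ⟨K', hK', hcol⟩ := ih _ (h ▸ Finite.card_subtype_lt (p := (· ∉ (S : Set V)))
    (not_not.mpr hv₁)) (G := G.induce (S : Set V)ᶜ)
    (fun hP => hG (hP.trans (Embedding.induce _).isIndContained)) rfl
  set K := K'.map (Function.Embedding.subtype _)
  obtain ⟨x, hxS, hx⟩ := exists_forall_adj_of_not_P4_isIndContained hG hS.isIndepSet hSdom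
    ⟨v₁, hv₁⟩ hK'.map_subtype (by simp +contextual [Finset.disjoint_left])
  refine ⟨insert x K, by rw [coe_insert]; exact hK'.map_subtype.insert fun y hy _ => hx y hy, ?_⟩
  rw [card_insert_of_notMem fun hxK => by simp [K] at hxK; exact hxK.1 hxS, card_map]
  exact hS.isIndepSet.colorable_succ hcol

theorem IndFree.exists_isClique_subset_colorable {s : Set V} [Finite s]
    (h : IndFree P4 (G.induce s)) :
    ∃ K : Finset V, ↑K ⊆ s ∧ G.IsClique K ∧ (G.induce s).Colorable #K := by
  rw [IndFree, ← isIndContained_iff_exists_iso_induce] at h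
  obtain ⟨K, hK, hcol⟩ := exists_isClique_colorable_card_of_not_P4_isIndContained h
  exact ⟨K.map (Function.Embedding.subtype _), by simp, hK.map_subtype, by rwa [card_map]⟩

end P4Free

namespace IsExpansion

variable {V W : Type*} {G : SimpleGraph V} {H : SimpleGraph W} {Q : W → Set V}
  {K : W → Finset V} {T : Finset W} {r : ℕ}

theorem biUnion_indepSet_card_le [DecidableEq V] (hexp : IsExpansion G H Q)
    (hK : ∀ w, G.IsClique (K w)) (hKQ : ∀ w, ↑(K w) ⊆ Q w)
    (hT : ∀ J ⊆ T, H.IsIndepSet J → #J ≤ r) :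
    ∀ I ⊆ T.biUnion K, G.IsIndepSet I → #I ≤ r := by
  classical
  obtain ⟨-, -, -, hcomplete, -⟩ := hexp
  intro I hI hind
  have hpart : ∀ x ∈ I, ∃ w ∈ T, x ∈ K w := fun x hx => mem_biUnion.mp (hI hx)
  obtain rfl | ⟨x₀, hx₀⟩ := I.eq_empty_or_nonempty
  · simp
  have : Nonempty W := let ⟨w, _⟩ := hpart x₀ hx₀; ⟨w⟩
  choose! part hpartT hpartK using hpart
  have hinj : Set.InjOn part (I : Set V) := by
    intro x hx y hy hxy
    by_contra hne
    exact hind hx hy hne (hK _ (hpartK x hx) (hxy ▸ hpartK y hy) hne)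
  rw [← card_image_of_injOn hinj]
  refine hT _ (image_subset_iff.mpr hpartT) ?_
  simp only [coe_image]
  rintro _ ⟨x, hx, rfl⟩ _ ⟨y, hy, rfl⟩ hne hadj
  exact hind hx hy (fun h => hne (h ▸ rfl))
    (hcomplete _ _ hadj x (hKQ _ (hpartK x hx)) y (hKQ _ (hpartK y hy)))

theorem sum_card_le_mul (hexp : IsExpansion G H Q) (hK : ∀ w, G.IsClique (K w))
    (hKQ : ∀ w, ↑(K w) ⊆ Q w) (hT : ∀ J ⊆ T, H.IsIndepSet J → #J ≤ r) {w₀ : W} (hw₀ : w₀ ∉ T)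
    {v : V} (hv : v ∈ Q w₀) {M : ℕ} (hcol : (G.induce {u | u ≠ v}).Colorable M) :
    ∑ w ∈ T, #(K w) ≤ r * M := by
  classical
  have hdisj : ∀ {w w'}, w ≠ w' → Disjoint (K w) (K w') := fun hne =>
    disjoint_coe.mp ((hexp.2.1 hne).mono (hKQ _) (hKQ _))
  rw [← card_biUnion fun w _ w' _ hne => hdisj hne]
  refine card_le_mul_of_induce_colorable hcol (fun x hx => ?_)
    (hexp.biUnion_indepSet_card_le hK hKQ hT)
  obtain ⟨w, hw, hxw⟩ := mem_biUnion.mp hx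
  rintro rfl
  exact Set.disjoint_left.mp (hexp.2.1 (ne_of_mem_of_not_mem hw hw₀)) (hKQ w hxw) hv

theorem colorable_of_isWeightedColoring (hexp : IsExpansion G H Q) {a : W → ℕ} {M : ℕ}
    {f : W → ℕ → ℕ} (hcol : ∀ w, (G.induce (Q w)).Colorable (a w))
    (hf : H.IsWeightedColoring a M f) : G.Colorable M := by
  obtain ⟨-, -, hcover, -, hanti⟩ := hexp
  choose part hpart using hcover
  choose c hc using fun w => (colorable_iff_exists_bdd_nat_coloring _).mp (hcol w)
  have hvalid : ∀ {u v : V}, G.Adj u v → ∀ w (hu : u ∈ Q w) w' (hv : v ∈ Q w'),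
      f w (c w ⟨u, hu⟩) ≠ f w' (c w' ⟨v, hv⟩) := by
    intro u v huv w hu w' hv
    by_cases hww' : w = w'
    · subst hww'
      exact (hf.injOn w).ne (hc w _) (hc w _) ((c w).valid huv)
    · by_cases hadj : H.Adj w w'
      · exact hf.ne_of_adj w w' hadj _ (hc w _) _ (hc w' _)
      · exact absurd huv (hanti w w' hww' hadj u hu v hv)
  exact (colorable_iff_exists_bdd_nat_coloring M).mpr
    ⟨Coloring.mk (fun v => f (part v) (c _ ⟨v, hpart v⟩)) fun huv => hvalid huv _ _ _ _,
      fun v => hf.lt _ _ (hc _ _)⟩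

end IsExpansion

instance : DecidableRel graphG2.Adj := fun a b =>
  decidable_of_iff' _ (SimpleGraph.fromRel_adj _ a b)

/-- With `r = M - a 2 - a 3` and `p = max (a 1) (a 5)`: part `0` takes the top `a 0` colours,
parts `1`, `5`, `2` take `[0, a 1)`, `[0, a 5)`, `[p, p + a 2)`; part `3` takes `[r, p)` and
continues from `max p r + a 2`, part `4` takes `[0, r)` and continues from `max p r`. -/
theorem graphG2_isWeightedColoring {a : Fin 6 → ℕ} {M : ℕ} (h235 : a 2 + a 3 + a 5 ≤ M)
    (h05 : a 0 + a 5 ≤ M) (h04 : a 0 + a 4 ≤ M) (h34 : a 3 + a 4 ≤ M) (h01 : a 0 + a 1 ≤ M)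
    (h12 : a 1 + a 2 ≤ M) (h01234 : a 0 + a 1 + a 2 + a 3 + a 4 ≤ 2 * M) :
    ∃ f, graphG2.IsWeightedColoring a M f := by
  set r := M - a 2 - a 3
  set p := max (a 1) (a 5)
  refine ⟨![fun x => M - a 0 + x, id, fun x => p + x,
    fun x => r + x + if x < p - r then 0 else a 2, fun x => x + if x < r then 0 else p - r, id],
    ⟨fun w x hx => ?_, fun w x hx y hy hxy => ?_, fun w w' hadj x hx y hy => ?_⟩⟩
  · fin_cases w <;> simp at hx ⊢ <;> (try split_ifs) <;> omega
  · fin_cases w <;> simp at hx hy hxy ⊢ <;> (try split_ifs at hxy) <;> omega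
  · fin_cases w <;> fin_cases w' <;> simp [graphG2] at hadj hx hy ⊢ <;> (try split_ifs) <;> omega

/-- no `P₄`-free expansion of `G₂` is `k`-vertex-critical for any `k`. -/
theorem no_critical_P4free_expansion_of_G2 {V : Type*} [Fintype V] (G : SimpleGraph V)
    (Q : Fin 6 → Set V) (hexp : IsExpansion G graphG2 Q)
    (hP4free : ∀ i, IndFree P4 (G.induce (Q i))) :
    ∀ k : ℕ, ¬ IsKVertexCritical G k := by
  rintro k ⟨hχ, hcrit⟩
  obtain ⟨v₁, hv₁⟩ := hexp.1 1
  obtain ⟨v₅, hv₅⟩ := hexp.1 5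
  obtain ⟨M, rfl⟩ : ∃ M, k = M + 1 :=
    Nat.exists_eq_add_one.mpr (Nat.pos_of_ne_zero (by rintro rfl; simpa using hcrit v₁))
  have hcol (v : V) : (G.induce {u | u ≠ v}).Colorable M :=
    chromaticNumber_le_iff_colorable.mp <|
      (ENat.lt_add_one_iff (by simp)).mp (by simpa using hcrit v)
  choose K hKQ hK hKcol using fun i => (hP4free i).exists_isClique_subset_colorable
  have bound (T : Finset (Fin 6)) (r : ℕ) (hT : ∀ J ⊆ T, graphG2.IsIndepSet J → #J ≤ r)
      (w₀ : Fin 6) (hw₀ : w₀ ∉ T) (v : V) (hv : v ∈ Q w₀) : ∑ i ∈ T, #(K i) ≤ r * M :=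
    hexp.sum_card_le_mul hK hKQ hT hw₀ hv (hcol v)
  obtain ⟨f, hf⟩ := graphG2_isWeightedColoring (a := fun i => #(K i)) (M := M)
    (by simpa [add_assoc] using bound {2, 3, 5} 1 (by decide) 1 (by decide) v₁ hv₁)
    (by simpa using bound {0, 5} 1 (by decide) 1 (by decide) v₁ hv₁)
    (by simpa using bound {0, 4} 1 (by decide) 1 (by decide) v₁ hv₁)
    (by simpa using bound {3, 4} 1 (by decide) 1 (by decide) v₁ hv₁)
    (by simpa using bound {0, 1} 1 (by decide) 5 (by decide) v₅ hv₅)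
    (by simpa using bound {1, 2} 1 (by decide) 5 (by decide) v₅ hv₅)
    (by simpa [add_assoc] using bound {0, 1, 2, 3, 4} 2 (by decide) 5 (by decide) v₅ hv₅)
  have hle := (hexp.colorable_of_isWeightedColoring hKcol hf).chromaticNumber_le
  rw [hχ] at hle
  exact absurd (by exact_mod_cast hle : M + 1 ≤ M) M.not_succ_le_self
end

section
/- Let G be a (P_5, gem)-free graph in the class H*: V(G) is partitioned into nonempty sets A_1,…,A_7 where A_1,…,A_5 are cliques arranged in a 5-cycle pattern (A_i complete to A_{i+1} mod 5 and anticomplete to A_{i+2}, A_{i+3} mod 5 for i=1,…,5), A_6 is complete to A_1 ∪ A_3 ∪ A_4 and anticomplete to A_2 ∪ A_5, every component of G[A_7] is a clique and a module of G, every vertex of A_7 has a neighbour in A_6, and A_7 is anticomplete to A_1 ∪ … ∪ A_5. Then every vertex subset S of G inducing a 5-cycle satisfies S ⊆ A_1 ∪ A_2 ∪ A_3 ∪ A_4 ∪ A_5 or S ⊆ A_6 ∪ A_7. -/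
/-!
Suppose an induced `C₅` with consecutive vertices `x y₁ z₁ z₂ y₂` meets both
`B = A₁ ∪ ⋯ ∪ A₅` and `C = A₆ ∪ A₇`, with `x ∈ C` and `y₁ ∈ B`. As `A₇` has no neighbour in `B`,
`x ∈ A₆`. A vertex of `B` is complete to `A₆` if it lies in `A₁ ∪ A₃ ∪ A₄` and anticomplete to
`A₆ ∪ A₇` if it lies in `A₂ ∪ A₅`; hence `y₁ ∈ A₁ ∪ A₃ ∪ A₄`.
If `z₁ ∈ B`, then `z₁` and `z₂` are non-neighbours of `x`, so both lie in `A₂ ∪ A₅`, and being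
adjacent they lie in the same `Aᵢ`; but then `y₁` is adjacent to `z₂` as well.
If `z₁ ∈ C`, then `z₁ ∈ A₆`, and `z₂`, `y₂`, each adjacent to exactly one of `x, z₁ ∈ A₆`, lie
in `C`. A neighbour `a ∈ A₂ ∪ A₅` of `y₁` has no neighbour in `C`, so `a y₁ z₁ z₂ y₂` is an
induced `P₅`.
-/

open SimpleGraph

/-- The partition conditions defining the class `H*` of (P₅, gem)-free graphs:
`A₁,…,A₅` are nonempty cliques in a `C₅` pattern, `A₆` is complete to `A₁ ∪ A₃ ∪ A₄`
and anticomplete to `A₂ ∪ A₅`, every component of `G[A₇]` is a clique and a module of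
`G`, every vertex of `A₇` has a neighbour in `A₆`, and `A₇` is anticomplete to
`A₁ ∪ ⋯ ∪ A₅`. -/
structure HStarPart {V : Type*} (G : SimpleGraph V)
    (A1 A2 A3 A4 A5 A6 A7 : Set V) : Prop where
  ne1 : A1.Nonempty
  ne2 : A2.Nonempty
  ne3 : A3.Nonempty
  ne4 : A4.Nonempty
  ne5 : A5.Nonempty
  ne6 : A6.Nonempty
  ne7 : A7.Nonempty
  pdisj : List.Pairwise Disjoint [A1, A2, A3, A4, A5, A6, A7]
  cover : A1 ∪ A2 ∪ A3 ∪ A4 ∪ A5 ∪ A6 ∪ A7 = Set.univ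
  cl1 : G.IsClique A1
  cl2 : G.IsClique A2
  cl3 : G.IsClique A3
  cl4 : G.IsClique A4
  cl5 : G.IsClique A5
  c12 : CompleteTo G A1 A2
  c23 : CompleteTo G A2 A3
  c34 : CompleteTo G A3 A4
  c45 : CompleteTo G A4 A5
  c51 : CompleteTo G A5 A1
  a13 : AnticompleteTo G A1 A3
  a14 : AnticompleteTo G A1 A4
  a24 : AnticompleteTo G A2 A4
  a25 : AnticompleteTo G A2 A5
  a35 : AnticompleteTo G A3 A5
  c61 : CompleteTo G A6 A1
  c63 : CompleteTo G A6 A3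
  c64 : CompleteTo G A6 A4
  a62 : AnticompleteTo G A6 A2
  a65 : AnticompleteTo G A6 A5
  a71 : AnticompleteTo G A7 A1
  a72 : AnticompleteTo G A7 A2
  a73 : AnticompleteTo G A7 A3
  a74 : AnticompleteTo G A7 A4
  a75 : AnticompleteTo G A7 A5
  /-- every component of `G[A₇]` is a clique -/
  comp_clique : ∀ x y : A7, (G.induce A7).Reachable x y → x = y ∨ G.Adj x.1 y.1
  /-- every component of `G[A₇]` is a module of `G` -/
  comp_module : ∀ x y : A7, (G.induce A7).Reachable x y →
    ∀ z : V, (¬ ∃ hz : z ∈ A7, (G.induce A7).Reachable x ⟨z, hz⟩) →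
      (G.Adj z x.1 ↔ G.Adj z y.1)
  a7nbr : ∀ x ∈ A7, ∃ y ∈ A6, G.Adj x y

open Fin.NatCast in
theorem Fin.exists_and_not_add_one {n : ℕ} {P : Fin (n + 1) → Prop} {i j : Fin (n + 1)}
    (hi : P i) (hj : ¬ P j) : ∃ k, P k ∧ ¬ P (k + 1) := by
  by_contra! h
  have hP : ∀ m : ℕ, P (i + (m : Fin (n + 1))) := by
    intro m
    induction m with
    | zero => simpa using hi
    | succ m ih => simpa [Nat.cast_succ, add_assoc] using h _ ih
  exact hj (by simpa using hP (j - i).val)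

theorem cycle5_adj_iff {i j : Fin 5} : cycle5.Adj i j ↔ j = i + 1 ∨ i = j + 1 := by
  revert i j; unfold cycle5; decide

theorem P5_eq_of_forall_adj_iff {i j : Fin 5} (h : ∀ k, P5.Adj i k ↔ P5.Adj j k) : i = j := by
  have : ∀ i j : Fin 5, (∀ k, P5.Adj i k ↔ P5.Adj j k) → i = j := by
    simp only [P5, pathGraph_adj]; decide
  exact this i j h

theorem indFree_iff_not_isIndContained {W V : Type*} {H : SimpleGraph W} {G : SimpleGraph V} :
    IndFree H G ↔ ¬ H ⊴ G :=
  not_congr isIndContained_iff_exists_iso_induce.symm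

theorem IndFree.false_of_induced_P5 {V : Type*} {G : SimpleGraph V} (hf : IndFree P5 G)
    {a b c d e : V}
    (hab : G.Adj a b) (hbc : G.Adj b c) (hcd : G.Adj c d) (hde : G.Adj d e)
    (hac : ¬ G.Adj a c) (had : ¬ G.Adj a d) (hae : ¬ G.Adj a e)
    (hbd : ¬ G.Adj b d) (hbe : ¬ G.Adj b e) (hce : ¬ G.Adj c e) : False := by
  let w : Fin 5 → V := ![a, b, c, d, e]
  have hw : ∀ i j, G.Adj (w i) (w j) ↔ P5.Adj i j := by
    intro i j
    fin_cases i <;> fin_cases j <;> simp [w, P5, pathGraph_adj, *, G.adj_comm]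
  have hinj : w.Injective := fun i j hij =>
    P5_eq_of_forall_adj_iff fun k => by rw [← hw, ← hw, hij]
  exact indFree_iff_not_isIndContained.1 hf ⟨⟨⟨w, hinj⟩, hw _ _⟩⟩

namespace HStarPart

variable {V : Type*} {G : SimpleGraph V} {A1 A2 A3 A4 A5 A6 A7 : Set V}

theorem mem_or_mem (hH : HStarPart G A1 A2 A3 A4 A5 A6 A7) (w : V) :
    w ∈ A1 ∪ A2 ∪ A3 ∪ A4 ∪ A5 ∨ w ∈ A6 ∪ A7 := by
  have hw : w ∈ A1 ∪ A2 ∪ A3 ∪ A4 ∪ A5 ∪ A6 ∪ A7 := hH.cover ▸ Set.mem_univ w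
  simp only [Set.mem_union] at hw ⊢
  tauto

theorem mem_A6_of_adj (hH : HStarPart G A1 A2 A3 A4 A5 A6 A7) {u w : V} (hu : u ∈ A6 ∪ A7)
    (hw : w ∈ A1 ∪ A2 ∪ A3 ∪ A4 ∪ A5) (h : G.Adj u w) : u ∈ A6 := by
  refine hu.resolve_right fun hu => ?_
  rcases hw with (((hw | hw) | hw) | hw) | hw
  exacts [hH.a71 u hu w hw h, hH.a72 u hu w hw h, hH.a73 u hu w hw h, hH.a74 u hu w hw h,
    hH.a75 u hu w hw h]

theorem adj_of_mem_A134 (hH : HStarPart G A1 A2 A3 A4 A5 A6 A7) {p w : V} (hp : p ∈ A6)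
    (hw : w ∈ A1 ∪ A3 ∪ A4) : G.Adj p w := by
  rcases hw with (hw | hw) | hw
  exacts [hH.c61 p hp w hw, hH.c63 p hp w hw, hH.c64 p hp w hw]

theorem not_adj_of_mem_A25 (hH : HStarPart G A1 A2 A3 A4 A5 A6 A7) {a u : V}
    (ha : a ∈ A2 ∪ A5) (hu : u ∈ A6 ∪ A7) : ¬ G.Adj a u := by
  rw [G.adj_comm]
  rcases hu with hu | hu <;> rcases ha with ha | ha
  exacts [hH.a62 u hu a ha, hH.a65 u hu a ha, hH.a72 u hu a ha, hH.a75 u hu a ha]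

theorem mem_A134_of_adj (hH : HStarPart G A1 A2 A3 A4 A5 A6 A7) {p w : V} (hp : p ∈ A6)
    (hw : w ∈ A1 ∪ A2 ∪ A3 ∪ A4 ∪ A5) (h : G.Adj p w) : w ∈ A1 ∪ A3 ∪ A4 := by
  have h25 : w ∉ A2 ∪ A5 := fun hw' => hH.not_adj_of_mem_A25 hw' (Or.inl hp) h.symm
  simp only [Set.mem_union] at hw h25 ⊢
  tauto

theorem mem_A25_of_not_adj (hH : HStarPart G A1 A2 A3 A4 A5 A6 A7) {p w : V} (hp : p ∈ A6)
    (hw : w ∈ A1 ∪ A2 ∪ A3 ∪ A4 ∪ A5) (h : ¬ G.Adj p w) : w ∈ A2 ∪ A5 := by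
  have h134 : w ∉ A1 ∪ A3 ∪ A4 := fun hw' => h (hH.adj_of_mem_A134 hp hw')
  simp only [Set.mem_union] at hw h134 ⊢
  tauto

theorem mem_of_adj_of_not_adj (hH : HStarPart G A1 A2 A3 A4 A5 A6 A7) {p q w : V}
    (hp : p ∈ A6) (hq : q ∈ A6) (hpw : G.Adj p w) (hqw : ¬ G.Adj q w) : w ∈ A6 ∪ A7 :=
  (hH.mem_or_mem w).resolve_left fun hw =>
    hqw (hH.adj_of_mem_A134 hq (hH.mem_A134_of_adj hp hw hpw))

theorem exists_adj_of_mem_A134 (hH : HStarPart G A1 A2 A3 A4 A5 A6 A7) {w : V}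
    (hw : w ∈ A1 ∪ A3 ∪ A4) : ∃ a ∈ A2 ∪ A5, G.Adj w a := by
  obtain ⟨a2, ha2⟩ := hH.ne2
  obtain ⟨a5, ha5⟩ := hH.ne5
  rcases hw with (hw | hw) | hw
  exacts [⟨a2, Or.inl ha2, hH.c12 w hw a2 ha2⟩, ⟨a2, Or.inl ha2, (hH.c23 a2 ha2 w hw).symm⟩,
    ⟨a5, Or.inr ha5, hH.c45 w hw a5 ha5⟩]

theorem adj_of_adj_of_adj (hH : HStarPart G A1 A2 A3 A4 A5 A6 A7) {y z z' : V}
    (hy : y ∈ A1 ∪ A3 ∪ A4) (hz : z ∈ A2 ∪ A5) (hz' : z' ∈ A2 ∪ A5)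
    (hyz : G.Adj y z) (hzz' : G.Adj z z') : G.Adj y z' := by
  rcases hz with hz | hz <;> rcases hz' with hz' | hz'
  · rcases hy with (hy | hy) | hy
    exacts [hH.c12 y hy z' hz', (hH.c23 z' hz' y hy).symm, absurd hyz.symm (hH.a24 z hz y hy)]
  · exact absurd hzz' (hH.a25 z hz z' hz')
  · exact absurd hzz'.symm (hH.a25 z' hz' z hz)
  · rcases hy with (hy | hy) | hy
    exacts [(hH.c51 z' hz' y hy).symm, absurd hyz (hH.a35 y hy z hz), hH.c45 y hy z' hz']

theorem false_of_induced_cycle_crossing (hH : HStarPart G A1 A2 A3 A4 A5 A6 A7)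
    (hP5 : IndFree P5 G) {v : Fin 5 → V} (hv : ∀ i j, G.Adj (v i) (v j) ↔ j = i + 1 ∨ i = j + 1)
    (h0 : v 0 ∈ A6 ∪ A7) (h1 : v 1 ∉ A6 ∪ A7) : False := by
  have adj : ∀ i j, j = i + 1 ∨ i = j + 1 → G.Adj (v i) (v j) := fun i j => (hv i j).2
  have nadj : ∀ i j, ¬ (j = i + 1 ∨ i = j + 1) → ¬ G.Adj (v i) (v j) := fun i j => mt (hv i j).1
  have hB : ∀ i, v i ∉ A6 ∪ A7 → v i ∈ A1 ∪ A2 ∪ A3 ∪ A4 ∪ A5 := fun i =>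
    (hH.mem_or_mem _).resolve_right
  have hx : v 0 ∈ A6 := hH.mem_A6_of_adj h0 (hB 1 h1) (adj 0 1 (by decide))
  have hy1 : v 1 ∈ A1 ∪ A3 ∪ A4 := hH.mem_A134_of_adj hx (hB 1 h1) (adj 0 1 (by decide))
  by_cases h2 : v 2 ∈ A6 ∪ A7
  · have hz1 : v 2 ∈ A6 := hH.mem_A6_of_adj h2 (hB 1 h1) (adj 2 1 (by decide))
    have h3 := hH.mem_of_adj_of_not_adj hz1 hx (adj 2 3 (by decide)) (nadj 0 3 (by decide))
    have h4 := hH.mem_of_adj_of_not_adj hx hz1 (adj 0 4 (by decide)) (nadj 2 4 (by decide))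
    obtain ⟨a, ha, hay1⟩ := hH.exists_adj_of_mem_A134 hy1
    exact hP5.false_of_induced_P5 hay1.symm (adj 1 2 (by decide)) (adj 2 3 (by decide))
      (adj 3 4 (by decide)) (hH.not_adj_of_mem_A25 ha h2) (hH.not_adj_of_mem_A25 ha h3)
      (hH.not_adj_of_mem_A25 ha h4) (nadj 1 3 (by decide)) (nadj 1 4 (by decide))
      (nadj 2 4 (by decide))
  · have hz1 : v 2 ∈ A2 ∪ A5 := hH.mem_A25_of_not_adj hx (hB 2 h2) (nadj 0 2 (by decide))
    have h3 : v 3 ∉ A6 ∪ A7 := fun h3 => hH.not_adj_of_mem_A25 hz1 h3 (adj 2 3 (by decide))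
    have hz2 : v 3 ∈ A2 ∪ A5 := hH.mem_A25_of_not_adj hx (hB 3 h3) (nadj 0 3 (by decide))
    exact nadj 1 3 (by decide)
      (hH.adj_of_adj_of_adj hy1 hz1 hz2 (adj 1 2 (by decide)) (adj 2 3 (by decide)))

end HStarPart

theorem C5_location_in_HStar_general {V : Type*} (G : SimpleGraph V)
    (A1 A2 A3 A4 A5 A6 A7 : Set V) (hH : HStarPart G A1 A2 A3 A4 A5 A6 A7)
    (hP5 : IndFree P5 G)
    (S : Set V) (hS : Nonempty (cycle5 ≃g G.induce S)) :
    S ⊆ A1 ∪ A2 ∪ A3 ∪ A4 ∪ A5 ∨ S ⊆ A6 ∪ A7 := by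
  obtain ⟨f⟩ := hS
  let v : Fin 5 → V := fun i => f i
  have hv : ∀ i j, G.Adj (v i) (v j) ↔ j = i + 1 ∨ i = j + 1 := fun i j =>
    f.map_adj_iff.trans cycle5_adj_iff
  refine or_iff_not_imp_right.2 fun hSC s hs => (hH.mem_or_mem s).resolve_right fun hsC => ?_
  obtain ⟨u, hu, huC⟩ := Set.not_subset.1 hSC
  obtain ⟨k, hk, hk1⟩ := Fin.exists_and_not_add_one (P := fun i => v i ∈ A6 ∪ A7)
    (i := f.symm ⟨s, hs⟩) (j := f.symm ⟨u, hu⟩) (by simpa [v] using hsC) (by simpa [v] using huC)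
  refine hH.false_of_induced_cycle_crossing hP5 (v := fun i => v (k + i)) (fun i j => ?_)
    (by simpa using hk) hk1
  rw [hv, add_assoc, add_assoc, add_right_inj, add_right_inj]

/-- in a (P₅, gem)-free graph of the class `H*`, every induced
five-cycle lies inside `A₁ ∪ ⋯ ∪ A₅` or inside `A₆ ∪ A₇`. -/
theorem C5_location_in_HStar {V : Type*} (G : SimpleGraph V)
    (A1 A2 A3 A4 A5 A6 A7 : Set V) (hH : HStarPart G A1 A2 A3 A4 A5 A6 A7)
    (hP5 : IndFree P5 G) (hgem : IndFree gem G)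
    (S : Set V) (hS : Nonempty (cycle5 ≃g G.induce S)) :
    S ⊆ A1 ∪ A2 ∪ A3 ∪ A4 ∪ A5 ∨ S ⊆ A6 ∪ A7 :=
  C5_location_in_HStar_general G A1 A2 A3 A4 A5 A6 A7 hH hP5 S hS
end

section
/- Let G be a clique expansion of a graph H on h vertices in which H has no isolated vertices, i.e., G is obtained by replacing each vertex v_i of H by a nonempty clique Q_i, with Q_i complete to Q_j when v_iv_j ∈ E(H) and anticomplete otherwise. If G is k-vertex-critical and G is not the complete graph K_k, then each clique Q_i has at most k−2 vertices, and hence |V(G)| ≤ (k−2)·h. -/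
open SimpleGraph

/-!
Let `Q w` be a part and `w'` a neighbour of `w` in `H`. Adding any vertex of `Q w'` to the
clique `Q w` gives a clique with `|Q w| + 1` vertices. In a `k`-vertex-critical graph a clique
on at least `k` vertices must contain every vertex (otherwise it survives the deletion of a
vertex outside it and keeps the chromatic number at least `k`), so it is the whole graph and
the graph is complete. Hence `|Q w| + 1 ≤ k - 1`, and summing over the parts bounds `|V(G)|`.
-/

section

variable {V W : Type*}

theorem IsKVertexCritical.eq_top_of_isClique {G : SimpleGraph V} {k : ℕ}
    (hcrit : IsKVertexCritical G k) {S : Set V} (hS : G.IsClique S) (hk : k ≤ S.ncard) :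
    G = ⊤ := by
  have hS_univ : S = Set.univ := Set.eq_univ_of_forall fun v => by
    by_contra hv
    have hle : (k : ℕ∞) ≤ (G.induce {u | u ≠ v}).chromaticNumber :=
      le_chromaticNumber_of_pairwise_adj (hk.trans (Nat.card_coe_set_eq S).ge)
        (fun x : S => ⟨x, fun h => hv (h ▸ x.2)⟩)
        (fun x y hxy => hS x.2 y.2 (Subtype.coe_injective.ne hxy))
    exact (hcrit.2 v).not_ge hle
  exact isClique_univ.mp (hS_univ ▸ hS)

namespace IsExpansion

variable {G : SimpleGraph V} {H : SimpleGraph W} {Q : W → Set V}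

theorem exists_isClique_ncard_eq_succ [Finite V] (hexp : IsExpansion G H Q) {w w' : W}
    (hQ : G.IsClique (Q w)) (hadj : H.Adj w w') :
    ∃ S : Set V, G.IsClique S ∧ S.ncard = (Q w).ncard + 1 := by
  obtain ⟨v', hv'⟩ := hexp.1 w'
  have hv'_notMem : v' ∉ Q w := Set.disjoint_right.mp (hexp.2.1 hadj.ne) hv'
  exact ⟨insert v' (Q w), hQ.insert fun u hu _ => (hexp.2.2.2.1 w w' hadj u hu v' hv').symm,
    Set.ncard_insert_of_notMem hv'_notMem (Set.toFinite _)⟩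

theorem card_eq_sum_ncard [Fintype V] [Fintype W] (hexp : IsExpansion G H Q) :
    Fintype.card V = ∑ w, (Q w).ncard := by
  have hcover : (⋃ w, Q w) = Set.univ :=
    Set.eq_univ_of_forall fun v => Set.mem_iUnion.mpr (hexp.2.2.1 v)
  rw [← Nat.card_eq_fintype_card, ← Set.ncard_univ, ← hcover,
    Set.ncard_iUnion_of_finite (fun _ => Set.toFinite _) hexp.2.1, finsum_eq_sum_of_fintype]

end IsExpansion

end

/-- if `G` is a clique expansion of a graph `H` without isolated vertices
and `G` is `k`-vertex-critical but not complete, then each part has at most `k − 2`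
vertices and `|V(G)| ≤ (k − 2)·|V(H)|`. -/
theorem clique_expansion_size_bound {V W : Type*} [Fintype V] [Fintype W]
    (G : SimpleGraph V) (H : SimpleGraph W) (Q : W → Set V)
    (hexp : IsExpansion G H Q) (hcliques : ∀ w, G.IsClique (Q w))
    (hnoiso : ∀ w : W, ∃ w' : W, H.Adj w w')
    (k : ℕ) (hcrit : IsKVertexCritical G k) (hnc : G ≠ ⊤) :
    (∀ w, (Q w).ncard ≤ k - 2) ∧ Fintype.card V ≤ (k - 2) * Fintype.card W := by
  have hpart : ∀ w, (Q w).ncard ≤ k - 2 := by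
    intro w
    by_contra! hw
    obtain ⟨w', hadj⟩ := hnoiso w
    obtain ⟨S, hS, hS_card⟩ := hexp.exists_isClique_ncard_eq_succ (hcliques w) hadj
    exact hnc (hcrit.eq_top_of_isClique hS (by omega))
  refine ⟨hpart, ?_⟩
  calc Fintype.card V = ∑ w, (Q w).ncard := hexp.card_eq_sum_ncard
    _ ≤ ∑ _w : W, (k - 2) := Finset.sum_le_sum fun w _ => hpart w
    _ = (k - 2) * Fintype.card W := by
      rw [Finset.sum_const, Finset.card_univ, smul_eq_mul, mul_comm]
end

section
/- Let G be a graph whose vertex set is partitioned into nonempty cliques Q_1,…,Q_5 forming a clique expansion of C_5 (Q_i complete to Q_{i±1} mod 5, anticomplete to Q_{i±2} mod 5). If G is k-vertex-critical and not complete, then |V(G)| = 2k − 1. -/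
open SimpleGraph

section AuxC5

private lemma aux02' (c0 c1 c2 c3 c4 : ℕ) (h1 : c3 ≤ c2) (h2 : c4 ≤ c0)
    (h3 : c1 + c3 + c4 ≤ c0 + c2) :
    ∃ x0 x1 x2 x3 x4 : ℕ,
      x4 + x0 ≤ c0 ∧ x0 + x1 ≤ c1 ∧ x1 + x2 ≤ c2 ∧ x2 + x3 ≤ c3 ∧ x3 + x4 ≤ c4 ∧
      c0 + c1 + c2 + c3 + c4 ≤ x0 + x1 + x2 + x3 + x4 + (c0 + c2) := by
  refine ⟨c1 - min c1 (c2 - c3), min c1 (c2 - c3), c3, 0, c4, ?_, ?_, ?_, ?_, ?_, ?_⟩ <;> omega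

private lemma matching5' (K c0 c1 c2 c3 c4 : ℕ) (hp0 : 1 ≤ c0)
    (hK0 : c0 + c2 ≤ K) (hK1 : c1 + c3 ≤ K) (hK2 : c2 + c4 ≤ K)
    (hK3 : c3 + c0 ≤ K) (hK4 : c4 + c1 ≤ K)
    (hn : c0 + c1 + c2 + c3 + c4 ≤ 2 * K) :
    ∃ x0 x1 x2 x3 x4 : ℕ,
      x4 + x0 ≤ c0 ∧ x0 + x1 ≤ c1 ∧ x1 + x2 ≤ c2 ∧ x2 + x3 ≤ c3 ∧ x3 + x4 ≤ c4 ∧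
      c0 + c1 + c2 + c3 + c4 ≤ x0 + x1 + x2 + x3 + x4 + K := by
  set n := c0 + c1 + c2 + c3 + c4 with hn'
  by_cases hsmall : c0 + c2 ≤ n / 2 ∧ c1 + c3 ≤ n / 2 ∧ c2 + c4 ≤ n / 2 ∧
      c3 + c0 ≤ n / 2 ∧ c4 + c1 ≤ n / 2
  · obtain ⟨s0, s1, s2, s3, s4⟩ := hsmall
    set d := n % 2 with hd
    refine ⟨((c0 - d) + c1 + c3 - (c2 + c4)) / 2,
            (c1 + c2 + c4 - (c3 + (c0 - d))) / 2,
            (c2 + c3 + (c0 - d) - (c4 + c1)) / 2,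
            (c3 + c4 + c1 - ((c0 - d) + c2)) / 2,
            (c4 + (c0 - d) + c2 - (c1 + c3)) / 2, ?_, ?_, ?_, ?_, ?_, ?_⟩ <;> omega
  · have hmax : (c1 + c3 ≤ c0 + c2 ∧ c2 + c4 ≤ c0 + c2 ∧ c3 + c0 ≤ c0 + c2 ∧ c4 + c1 ≤ c0 + c2)
      ∨ (c2 + c4 ≤ c1 + c3 ∧ c3 + c0 ≤ c1 + c3 ∧ c4 + c1 ≤ c1 + c3 ∧ c0 + c2 ≤ c1 + c3)
      ∨ (c3 + c0 ≤ c2 + c4 ∧ c4 + c1 ≤ c2 + c4 ∧ c0 + c2 ≤ c2 + c4 ∧ c1 + c3 ≤ c2 + c4)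
      ∨ (c4 + c1 ≤ c3 + c0 ∧ c0 + c2 ≤ c3 + c0 ∧ c1 + c3 ≤ c3 + c0 ∧ c2 + c4 ≤ c3 + c0)
      ∨ (c0 + c2 ≤ c4 + c1 ∧ c1 + c3 ≤ c4 + c1 ∧ c2 + c4 ≤ c4 + c1 ∧ c3 + c0 ≤ c4 + c1) := by
      omega
    rcases hmax with ⟨a,b,c,d⟩ | ⟨a,b,c,d⟩ | ⟨a,b,c,d⟩ | ⟨a,b,c,d⟩ | ⟨a,b,c,d⟩
    · obtain ⟨y0,y1,y2,y3,y4,g0,g1,g2,g3,g4,gs⟩ :=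
        aux02' c0 c1 c2 c3 c4 (by omega) (by omega) (by omega)
      exact ⟨y0,y1,y2,y3,y4, g0, g1, g2, g3, g4, by omega⟩
    · obtain ⟨y0,y1,y2,y3,y4,g0,g1,g2,g3,g4,gs⟩ :=
        aux02' c1 c2 c3 c4 c0 (by omega) (by omega) (by omega)
      exact ⟨y4,y0,y1,y2,y3, by omega, by omega, by omega, by omega, by omega, by omega⟩
    · obtain ⟨y0,y1,y2,y3,y4,g0,g1,g2,g3,g4,gs⟩ :=
        aux02' c2 c3 c4 c0 c1 (by omega) (by omega) (by omega)
      exact ⟨y3,y4,y0,y1,y2, by omega, by omega, by omega, by omega, by omega, by omega⟩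
    · obtain ⟨y0,y1,y2,y3,y4,g0,g1,g2,g3,g4,gs⟩ :=
        aux02' c3 c4 c0 c1 c2 (by omega) (by omega) (by omega)
      exact ⟨y2,y3,y4,y0,y1, by omega, by omega, by omega, by omega, by omega, by omega⟩
    · obtain ⟨y0,y1,y2,y3,y4,g0,g1,g2,g3,g4,gs⟩ :=
        aux02' c4 c0 c1 c2 c3 (by omega) (by omega) (by omega)
      exact ⟨y1,y2,y3,y4,y0, by omega, by omega, by omega, by omega, by omega, by omega⟩

private lemma expansion_colorable' {V : Type*} [Fintype V] (G : SimpleGraph V)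
    (Q : ZMod 5 → Set V)
    (hne : ∀ i, (Q i).Nonempty)
    (hdisj : ∀ i j, i ≠ j → Disjoint (Q i) (Q j))
    (hcover : ∀ v : V, ∃ i, v ∈ Q i)
    (hanti2 : ∀ i, AnticompleteTo G (Q i) (Q (i + 2)))
    (K : ℕ)
    (hpair : ∀ i : ZMod 5, (Q i).ncard + (Q (i+1)).ncard ≤ K)
    (hcard : Fintype.card V ≤ 2 * K) :
    G.Colorable K := by
  classical
  set n : ZMod 5 → ℕ := fun i => (Q i).ncard with hn
  have hsumV : n 0 + n 1 + n 2 + n 3 + n 4 ≤ Fintype.card V := by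
    have hQcard : ∀ i : ZMod 5, ((Q i).toFinset).card = n i := by
      intro i; exact (Set.ncard_eq_toFinset_card' _).symm
    have hdisjF : ∀ i j : ZMod 5, i ≠ j → Disjoint (Q i).toFinset (Q j).toFinset := by
      intro i j hij; rw [Set.disjoint_toFinset]; exact hdisj i j hij
    have hcard4 := Finset.card_le_univ ((Q 0).toFinset ∪ (Q 1).toFinset ∪ (Q 2).toFinset
        ∪ (Q 3).toFinset ∪ (Q 4).toFinset)
    rw [Finset.card_union_of_disjoint, Finset.card_union_of_disjoint,
        Finset.card_union_of_disjoint, Finset.card_union_of_disjoint] at hcard4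
    · simp only [hQcard] at hcard4; exact hcard4
    · exact hdisjF 0 1 (by decide)
    · rw [Finset.disjoint_union_left]
      exact ⟨hdisjF 0 2 (by decide), hdisjF 1 2 (by decide)⟩
    · rw [Finset.disjoint_union_left, Finset.disjoint_union_left]
      exact ⟨⟨hdisjF 0 3 (by decide), hdisjF 1 3 (by decide)⟩, hdisjF 2 3 (by decide)⟩
    · rw [Finset.disjoint_union_left, Finset.disjoint_union_left, Finset.disjoint_union_left]
      exact ⟨⟨⟨hdisjF 0 4 (by decide), hdisjF 1 4 (by decide)⟩, hdisjF 2 4 (by decide)⟩,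
        hdisjF 3 4 (by decide)⟩
  have hp0 : 1 ≤ n 0 := by
    rw [hn]
    exact (Set.ncard_pos ((Q 0).toFinite)).mpr (hne 0)
  have hpair' : ∀ i : ZMod 5, n i + n (i+1) ≤ K := hpair
  have hP0 := hpair' 0; have hP1 := hpair' 1; have hP2 := hpair' 2
  have hP3 := hpair' 3; have hP4 := hpair' 4
  norm_num at hP0 hP1 hP2 hP3 hP4
  rw [show (5 : ZMod 5) = 0 from by decide] at hP4
  obtain ⟨x0, x1, x2, x3, x4, g0, g1, g2, g3, g4, gs⟩ :=
    matching5' K (n 0) (n 2) (n 4) (n 1) (n 3) hp0 (by omega) (by omega) (by omega)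
      (by omega) (by omega) (by omega)
  set m : ZMod 5 → ℕ := fun j => if j = 0 then x0 else if j = 1 then x3
    else if j = 2 then x1 else if j = 3 then x4 else x2 with hmdef
  have hm0 : m 0 = x0 := rfl
  have hm1 : m 1 = x3 := rfl
  have hm2 : m 2 = x1 := rfl
  have hm3 : m 3 = x4 := rfl
  have hm4 : m 4 = x2 := rfl
  have henum : ∀ j : ZMod 5, j = 0 ∨ j = 1 ∨ j = 2 ∨ j = 3 ∨ j = 4 := by decide
  have hne3 : ∀ j : ZMod 5, j ≠ j + 3 := by decide
  have hinj3 : ∀ a b : ZMod 5, a + 3 = b + 3 → a = b := by decide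
  have hsolve : ∀ a b : ZMod 5, a = b + 3 → b = a + 2 := by decide
  have hm : ∀ i : ZMod 5, m i + m (i+3) ≤ n i := by
    intro i
    rcases henum i with rfl|rfl|rfl|rfl|rfl
    · rw [show (0:ZMod 5)+3 = 3 from by decide, hm0, hm3]; omega
    · rw [show (1:ZMod 5)+3 = 4 from by decide, hm1, hm4]; omega
    · rw [show (2:ZMod 5)+3 = 0 from by decide, hm2, hm0]; omega
    · rw [show (3:ZMod 5)+3 = 1 from by decide, hm3, hm1]; omega
    · rw [show (4:ZMod 5)+3 = 2 from by decide, hm4, hm2]; omega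
  set M : ℕ := x0 + x1 + x2 + x3 + x4 with hM
  set S : ZMod 5 → ℕ := fun j => if j = 0 then 0 else if j = 1 then m 0
    else if j = 2 then m 0 + m 1 else if j = 3 then m 0 + m 1 + m 2
    else m 0 + m 1 + m 2 + m 3 with hSdef
  have hS0 : S 0 = 0 := rfl
  have hS1 : S 1 = m 0 := rfl
  have hS2 : S 2 = m 0 + m 1 := rfl
  have hS3 : S 3 = m 0 + m 1 + m 2 := rfl
  have hS4 : S 4 = m 0 + m 1 + m 2 + m 3 := rfl
  have hSM : ∀ j, S j + m j ≤ M := by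
    intro j
    rcases henum j with rfl|rfl|rfl|rfl|rfl <;>
      simp only [hS0, hS1, hS2, hS3, hS4, hm0, hm1, hm2, hm3, hm4] <;> omega
  have hSdisj : ∀ j j' : ZMod 5, j ≠ j' → S j + m j ≤ S j' ∨ S j' + m j' ≤ S j := by
    intro j j' hjj
    rcases henum j with rfl|rfl|rfl|rfl|rfl <;> rcases henum j' with rfl|rfl|rfl|rfl|rfl <;>
      simp only [hS0, hS1, hS2, hS3, hS4] <;>
      first
        | exact absurd rfl hjj
        | omega
  set Lf : ZMod 5 → ℕ := fun i => n i - m i - m (i+3) with hLdef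
  have hl0 : Lf 0 = n 0 - x0 - x4 := by
    rw [show Lf 0 = n 0 - m 0 - m ((0:ZMod 5)+3) from rfl,
      show (0:ZMod 5)+3 = 3 from by decide, hm0, hm3]
  have hl1 : Lf 1 = n 1 - x3 - x2 := by
    rw [show Lf 1 = n 1 - m 1 - m ((1:ZMod 5)+3) from rfl,
      show (1:ZMod 5)+3 = 4 from by decide, hm1, hm4]
  have hl2 : Lf 2 = n 2 - x1 - x0 := by
    rw [show Lf 2 = n 2 - m 2 - m ((2:ZMod 5)+3) from rfl,
      show (2:ZMod 5)+3 = 0 from by decide, hm2, hm0]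
  have hl3 : Lf 3 = n 3 - x4 - x3 := by
    rw [show Lf 3 = n 3 - m 3 - m ((3:ZMod 5)+3) from rfl,
      show (3:ZMod 5)+3 = 1 from by decide, hm3, hm1]
  have hl4 : Lf 4 = n 4 - x2 - x1 := by
    rw [show Lf 4 = n 4 - m 4 - m ((4:ZMod 5)+3) from rfl,
      show (4:ZMod 5)+3 = 2 from by decide, hm4, hm2]
  set Ltot : ℕ := Lf 0 + Lf 1 + Lf 2 + Lf 3 + Lf 4 with hLtot
  set T : ZMod 5 → ℕ := fun j => if j = 0 then 0 else if j = 1 then Lf 0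
    else if j = 2 then Lf 0 + Lf 1 else if j = 3 then Lf 0 + Lf 1 + Lf 2
    else Lf 0 + Lf 1 + Lf 2 + Lf 3 with hTdef
  have hT0 : T 0 = 0 := rfl
  have hT1 : T 1 = Lf 0 := rfl
  have hT2 : T 2 = Lf 0 + Lf 1 := rfl
  have hT3 : T 3 = Lf 0 + Lf 1 + Lf 2 := rfl
  have hT4 : T 4 = Lf 0 + Lf 1 + Lf 2 + Lf 3 := rfl
  have hTL : ∀ j, T j + Lf j ≤ Ltot := by
    intro j
    rcases henum j with rfl|rfl|rfl|rfl|rfl <;>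
      simp only [hT0, hT1, hT2, hT3, hT4] <;> omega
  have hTdisj : ∀ j j' : ZMod 5, j ≠ j' → T j + Lf j ≤ T j' ∨ T j' + Lf j' ≤ T j := by
    intro j j' hjj
    rcases henum j with rfl|rfl|rfl|rfl|rfl <;> rcases henum j' with rfl|rfl|rfl|rfl|rfl <;>
      simp only [hT0, hT1, hT2, hT3, hT4] <;>
      first
        | exact absurd rfl hjj
        | omega
  have hKb : M + Ltot ≤ K := by omega
  set colAux : ZMod 5 → ℕ → ℕ := fun i p =>
    if p < m i then S i + p
    else if p < m i + m (i+3) then S (i+3) + (p - m i)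
    else M + T i + (p - m i - m (i+3)) with hcolAux
  have hbound : ∀ i p, p < n i → colAux i p < M + Ltot := by
    intro i p hp
    have hSMi := hSM i; have hSMi3 := hSM (i+3); have hTLi := hTL i
    have hmi := hm i
    have hLvi : Lf i = n i - m i - m (i+3) := rfl
    simp only [hcolAux]
    split_ifs with h1 h2 <;> omega
  have hsame : ∀ i p q, p ≠ q → colAux i p ≠ colAux i q := by
    intro i p q hpq
    have hSMi := hSM i; have hSMi3 := hSM (i+3)
    have hd := hSdisj i (i+3) (hne3 i)
    simp only [hcolAux]
    split_ifs <;> rcases hd with hd|hd <;> omega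
  have hcross : ∀ i i' p q, p < n i → q < n i' → i ≠ i' → colAux i p = colAux i' q →
      i' = i + 2 ∨ i = i' + 2 := by
    intro i i' p q hp hq hii heq
    have hSMi := hSM i; have hSMi' := hSM i'
    have hSMi3 := hSM (i+3); have hSMi3' := hSM (i'+3)
    have e1 := hm i; have e2 := hm i'
    have f1 : Lf i = n i - m i - m (i+3) := rfl
    have f2 : Lf i' = n i' - m i' - m (i'+3) := rfl
    have t1 := hTL i; have t2 := hTL i'
    simp only [hcolAux] at heq
    split_ifs at heq
    all_goals try (exfalso; rcases hSdisj i i' hii with h|h <;> omega)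
    all_goals try (exfalso; rcases hSdisj (i+3) (i'+3) (fun hh => hii (hinj3 _ _ hh)) with h|h <;> omega)
    all_goals try (exfalso; rcases hTdisj i i' hii with h|h <;> omega)
    all_goals try (exfalso; omega)
    · by_cases hty : i = i' + 3
      · exact Or.inl (hsolve i i' hty)
      · exfalso; rcases hSdisj i (i'+3) hty with h|h <;> omega
    · by_cases hty : i' = i + 3
      · exact Or.inr (hsolve i' i hty)
      · exfalso; rcases hSdisj (i+3) i' (fun hh => hty hh.symm) with h|h <;> omega
  set part : V → ZMod 5 := fun v => (hcover v).choose with hpartdef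
  have hpart : ∀ v, v ∈ Q (part v) := fun v => (hcover v).choose_spec
  have hcardQ : ∀ i : ZMod 5, Fintype.card (Q i) = n i := fun i =>
    (Set.toFinset_card _).symm.trans (Set.ncard_eq_toFinset_card' _).symm
  have e : ∀ i : ZMod 5, (Q i) ≃ Fin (n i) := fun i => Fintype.equivFinOfCardEq (hcardQ i)
  set idx : V → ℕ := fun v => (e (part v) ⟨v, hpart v⟩ : Fin _).val with hidxdef
  have hidxlt : ∀ v, idx v < n (part v) := fun v => (e (part v) ⟨v, hpart v⟩).isLt
  have hidxgen : ∀ (u : V) (j : ZMod 5) (h : part u = j) (hu : u ∈ Q j),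
      idx u = (e j ⟨u, hu⟩ : Fin _).val := by
    intro u j h hu; subst h; rfl
  have hvinj : ∀ v w, part v = part w → idx v = idx w → v = w := by
    intro v w hp hi
    have hw : w ∈ Q (part v) := hp ▸ hpart w
    have h1 : idx v = (e (part v) ⟨v, hpart v⟩ : Fin _).val := rfl
    have h2 : idx w = (e (part v) ⟨w, hw⟩ : Fin _).val := hidxgen w (part v) hp.symm hw
    have h3 : (⟨v, hpart v⟩ : Q (part v)) = ⟨w, hw⟩ :=
      (e (part v)).injective (Fin.val_injective (by omega))
    exact congrArg Subtype.val h3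
  have hvalid : ∀ v w, G.Adj v w → colAux (part v) (idx v) ≠ colAux (part w) (idx w) := by
    intro v w hadj heq
    by_cases hp : part v = part w
    · have hne' : idx v ≠ idx w := fun h => (G.ne_of_adj hadj) (hvinj v w hp h)
      rw [← hp] at heq
      exact hsame (part v) (idx v) (idx w) hne' heq
    · rcases hcross (part v) (part w) (idx v) (idx w) (hidxlt v) (hidxlt w) hp heq with h|h
      · exact hanti2 (part v) v (hpart v) w (h ▸ hpart w) hadj
      · exact hanti2 (part w) w (hpart w) v (h ▸ hpart v) hadj.symm
  have hcolbound : ∀ v, colAux (part v) (idx v) < K := fun v =>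
    lt_of_lt_of_le (hbound (part v) (idx v) (hidxlt v)) hKb
  exact ⟨SimpleGraph.Coloring.mk (fun v => (⟨colAux (part v) (idx v), hcolbound v⟩ : Fin K))
    (fun hadj => by simpa [Fin.ext_iff] using hvalid _ _ hadj)⟩

private lemma indep_le_two' {V : Type*} (G : SimpleGraph V) (Q : ZMod 5 → Set V)
    (hcover : ∀ v : V, ∃ i, v ∈ Q i)
    (hclique : ∀ i, G.IsClique (Q i))
    (hcomp : ∀ i, CompleteTo G (Q i) (Q (i + 1))) :
    ∀ x y z : V, ¬G.Adj x y → ¬G.Adj x z → ¬G.Adj y z → x = y ∨ x = z ∨ y = z := by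
  intro x y z hxy hxz hyz
  obtain ⟨a, ha⟩ := hcover x
  obtain ⟨b, hb⟩ := hcover y
  obtain ⟨c, hc⟩ := hcover z
  by_cases hab : a = b
  · subst hab
    left
    by_contra hne
    exact hxy (hclique a ha hb hne)
  by_cases hac : a = c
  · subst hac
    right; left
    by_contra hne
    exact hxz (hclique a ha hc hne)
  by_cases hbc : b = c
  · subst hbc
    right; right
    by_contra hne
    exact hyz (hclique b hb hc hne)
  exfalso
  have hdec : ∀ a b c : ZMod 5, a ≠ b → a ≠ c → b ≠ c →
      (b = a + 1 ∨ a = b + 1 ∨ c = a + 1 ∨ a = c + 1 ∨ c = b + 1 ∨ b = c + 1) := by decide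
  have hadj := hdec a b c hab hac hbc
  rcases hadj with h|h|h|h|h|h
  · exact hxy (hcomp a x ha y (h ▸ hb))
  · exact hxy (hcomp b y hb x (h ▸ ha)).symm
  · exact hxz (hcomp a x ha z (h ▸ hc))
  · exact hxz (hcomp c z hc x (h ▸ ha)).symm
  · exact hyz (hcomp b y hb z (h ▸ hc))
  · exact hyz (hcomp c z hc y (h ▸ hb)).symm

private lemma colorable_card_bound' {V : Type*} [Fintype V] (G : SimpleGraph V)
    (Q : ZMod 5 → Set V)
    (hcover : ∀ v : V, ∃ i, v ∈ Q i)
    (hclique : ∀ i, G.IsClique (Q i))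
    (hcomp : ∀ i, CompleteTo G (Q i) (Q (i + 1)))
    (S : Set V) (mm : ℕ) (hcol : (G.induce S).Colorable mm) :
    S.ncard ≤ 2 * mm := by
  classical
  have hcardS : S.ncard = (Finset.univ : Finset S).card := by
    rw [Set.ncard_eq_toFinset_card', Set.toFinset_card, Finset.card_univ]
  obtain ⟨C⟩ := hcol
  have key : (Finset.univ : Finset S).card ≤ 2 * mm := by
    rw [Finset.card_eq_sum_card_image C Finset.univ]
    have hfib : ∀ a ∈ Finset.univ.image C,
        (Finset.univ.filter (fun x : S => C x = a)).card ≤ 2 := by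
      intro a _
      by_contra hgt
      push_neg at hgt
      obtain ⟨x, hx, y, hy, z, hz, hxy, hxz, hyz⟩ := Finset.two_lt_card.mp hgt
      simp only [Finset.mem_filter] at hx hy hz
      have nxy : ¬ G.Adj (x : V) (y : V) := fun h => C.valid h (hx.2.trans hy.2.symm)
      have nxz : ¬ G.Adj (x : V) (z : V) := fun h => C.valid h (hx.2.trans hz.2.symm)
      have nyz : ¬ G.Adj (y : V) (z : V) := fun h => C.valid h (hy.2.trans hz.2.symm)
      rcases indep_le_two' G Q hcover hclique hcomp x y z nxy nxz nyz with h|h|h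
      · exact hxy (Subtype.ext h)
      · exact hxz (Subtype.ext h)
      · exact hyz (Subtype.ext h)
    calc ∑ a ∈ Finset.univ.image C, (Finset.univ.filter (fun x : S => C x = a)).card
        ≤ ∑ _a ∈ Finset.univ.image C, 2 := Finset.sum_le_sum hfib
      _ = 2 * (Finset.univ.image C).card := by rw [Finset.sum_const]; ring
      _ ≤ 2 * mm := by
          have := Finset.card_le_univ (Finset.univ.image C)
          simp only [Finset.card_univ, Fintype.card_fin] at this
          omega
  omega

private lemma clique_pair_bound' {V : Type*} [Fintype V] (G : SimpleGraph V)
    (Q : ZMod 5 → Set V)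
    (hdisj : ∀ i j, i ≠ j → Disjoint (Q i) (Q j))
    (hclique : ∀ i, G.IsClique (Q i))
    (hcomp : ∀ i, CompleteTo G (Q i) (Q (i + 1)))
    (i : ZMod 5) (S : Set V) (hsub : Q i ∪ Q (i+1) ⊆ S)
    (mm : ℕ) (hcol : (G.induce S).Colorable mm) :
    (Q i).ncard + (Q (i+1)).ncard ≤ mm := by
  classical
  obtain ⟨C⟩ := hcol
  set U : Set V := Q i ∪ Q (i+1) with hU
  have hUadj : ∀ u u' : V, u ∈ U → u' ∈ U → u ≠ u' → G.Adj u u' := by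
    intro u u' hu hu' hne
    rcases hu with h1|h1 <;> rcases hu' with h2|h2
    · exact hclique i h1 h2 hne
    · exact hcomp i u h1 u' h2
    · exact (hcomp i u' h2 u h1).symm
    · exact hclique (i+1) h1 h2 hne
  have hinj : Function.Injective (fun u : U => C ⟨u.1, hsub u.2⟩) := by
    intro u u' h
    by_contra hne
    have hne' : (u : V) ≠ (u' : V) := fun hh => hne (Subtype.ext hh)
    exact C.valid (show (G.induce S).Adj ⟨u.1, hsub u.2⟩ ⟨u'.1, hsub u'.2⟩ from
      hUadj u u' u.2 u'.2 hne') h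
  have hcardle : Fintype.card U ≤ mm := by
    have := Fintype.card_le_of_injective _ hinj
    simpa using this
  have hUcard : Fintype.card U = (Q i).ncard + (Q (i+1)).ncard := by
    have h1 : Fintype.card U = U.ncard :=
      (Set.toFinset_card _).symm.trans (Set.ncard_eq_toFinset_card' _).symm
    have hone : ∀ j : ZMod 5, j ≠ j + 1 := by decide
    rw [h1, hU, Set.ncard_union_eq (hdisj i (i+1) (hone i)) (Q i).toFinite (Q (i+1)).toFinite]
  omega

end AuxC5

/-- a `k`-vertex-critical, non-complete clique expansion of `C₅` has
exactly `2k − 1` vertices. -/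
theorem critical_C5_expansion_order {V : Type*} [Fintype V] (G : SimpleGraph V)
    (Q : ZMod 5 → Set V)
    (hne : ∀ i, (Q i).Nonempty)
    (hdisj : ∀ i j, i ≠ j → Disjoint (Q i) (Q j))
    (hcover : ∀ v : V, ∃ i, v ∈ Q i)
    (hclique : ∀ i, G.IsClique (Q i))
    (hcomp : ∀ i, CompleteTo G (Q i) (Q (i + 1)))
    (hanti2 : ∀ i, AnticompleteTo G (Q i) (Q (i + 2)))
    (hanti3 : ∀ i, AnticompleteTo G (Q i) (Q (i + 3)))
    (k : ℕ) (hcrit : IsKVertexCritical G k) (hnc : G ≠ ⊤) :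
    Fintype.card V = 2 * k - 1 := by
  classical
  obtain ⟨hchrom, hdel⟩ := hcrit
  have v0 : V := (hne 0).choose
  have hk1 : 1 ≤ k := by
    by_contra h
    have hk0 : k = 0 := by omega
    have := hdel v0
    rw [hk0] at this
    simp at this
  have hcolv : ∀ v : V, (G.induce {u | u ≠ v}).Colorable (k-1) := by
    intro v
    have hlt := hdel v
    have hfin : (G.induce {u | u ≠ v}).chromaticNumber ≠ ⊤ := ne_top_of_lt hlt
    obtain ⟨c, hc⟩ := WithTop.ne_top_iff_exists.mp hfin
    have hck : c < k := by rw [← hc] at hlt; exact Nat.cast_lt.mp hlt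
    have hCc : (G.induce {u | u ≠ v}).Colorable c := by
      rw [← SimpleGraph.chromaticNumber_le_iff_colorable, ← hc]
      exact le_refl _
    exact hCc.mono (by omega : c ≤ k - 1)
  -- the vertex count is at most 2k-1
  have hcompl : ({u | u ≠ v0} : Set V).ncard = Fintype.card V - 1 := by
    have h1 : ({u | u ≠ v0} : Set V) = ({v0} : Set V)ᶜ := by
      ext u; simp
    have h2 := Set.ncard_add_ncard_compl ({v0} : Set V)
    rw [Set.ncard_singleton, Nat.card_eq_fintype_card] at h2
    rw [h1]
    omega
  have h2 : Fintype.card V - 1 ≤ 2 * (k-1) := by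
    have hb := colorable_card_bound' G Q hcover hclique hcomp {u | u ≠ v0} (k-1) (hcolv v0)
    omega
  -- each pair of consecutive cliques is small
  have hd1 : ∀ j : ZMod 5, j ≠ j + 3 := by decide
  have hd2 : ∀ j : ZMod 5, j + 1 ≠ j + 3 := by decide
  have hKpair : ∀ i : ZMod 5, (Q i).ncard + (Q (i+1)).ncard ≤ k - 1 := by
    intro i
    have hv := hne (i+3)
    have hvQ : hv.choose ∈ Q (i+3) := hv.choose_spec
    have hsub : Q i ∪ Q (i+1) ⊆ {u | u ≠ hv.choose} := by
      intro u hu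
      simp only [Set.mem_setOf_eq]
      rcases hu with h|h
      · exact fun heq => Set.disjoint_left.mp (hdisj i (i+3) (hd1 i)) h (heq ▸ hvQ)
      · exact fun heq => Set.disjoint_left.mp (hdisj (i+1) (i+3) (hd2 i)) h (heq ▸ hvQ)
    exact clique_pair_bound' G Q hdisj hclique hcomp i _ hsub _ (hcolv hv.choose)
  by_cases hsm : Fintype.card V ≤ 2 * k - 2
  · exfalso
    have hcolG := expansion_colorable' G Q hne hdisj hcover hanti2 (k-1) hKpair (by omega)
    have hle : G.chromaticNumber ≤ ((k-1 : ℕ) : ℕ∞) := hcolG.chromaticNumber_le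
    rw [hchrom] at hle
    have : k ≤ k - 1 := Nat.cast_le.mp hle
    omega
  · omega
end

section
/- Let G be a graph in H* (defined below) and suppose S ⊆ V(G) induces one of the graphs G_4,…,G_10 (each of which contains an induced C_5 together with additional vertices). If D ⊆ S induces a C_5 with D ⊆ A_1 ∪ … ∪ A_5, then every vertex of S∖D having a neighbour in D lies in A_6, and any two vertices u, v ∈ S∖D with neighbours in D satisfy N(u)∩D = N(v)∩D. -/
open SimpleGraph

/-- The graph `G₄` of the structure theorem. -/
def graphG4 : SimpleGraph (Fin 7) :=
  SimpleGraph.fromRel (fun a b => (a, b) ∈ [((0 : Fin 7), (1 : Fin 7)), (0, 4), (0, 5), (0, 6),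
    (1, 2), (1, 6), (2, 3), (2, 5), (3, 4), (3, 5), (3, 6)])

/-- The graph `G₅` of the structure theorem. -/
def graphG5 : SimpleGraph (Fin 8) :=
  SimpleGraph.fromRel (fun a b => (a, b) ∈ [((0 : Fin 8), (1 : Fin 8)), (0, 4), (0, 5), (0, 6),
    (0, 7), (1, 2), (1, 6), (2, 3), (2, 5), (2, 7), (3, 4), (3, 5), (3, 6)])

/-- The graph `G₆` of the structure theorem. -/
def graphG6 : SimpleGraph (Fin 8) :=
  SimpleGraph.fromRel (fun a b => (a, b) ∈ [((0 : Fin 8), (1 : Fin 8)), (0, 4), (0, 5), (0, 6),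
    (1, 2), (1, 6), (1, 7), (2, 3), (2, 5), (3, 4), (3, 5), (3, 6), (4, 7), (5, 7)])

/-- The graph `G₇` of the structure theorem. -/
def graphG7 : SimpleGraph (Fin 8) :=
  SimpleGraph.fromRel (fun a b => (a, b) ∈ [((0 : Fin 8), (1 : Fin 8)), (0, 2), (0, 3), (0, 6),
    (1, 2), (1, 4), (1, 7), (2, 5), (3, 4), (3, 5), (3, 7), (4, 5), (4, 6)])

/-- The graph `G₈` of the structure theorem. -/
def graphG8 : SimpleGraph (Fin 8) :=
  SimpleGraph.fromRel (fun a b => (a, b) ∈ [((0 : Fin 8), (1 : Fin 8)), (0, 4), (0, 5), (0, 6),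
    (1, 2), (1, 7), (2, 3), (2, 6), (3, 4), (3, 5), (3, 7), (4, 6), (5, 7), (6, 7)])

/-- The graph `G₉` of the structure theorem. -/
def graphG9 : SimpleGraph (Fin 9) :=
  SimpleGraph.fromRel (fun a b => (a, b) ∈ [((0 : Fin 9), (1 : Fin 9)), (0, 4), (0, 5), (0, 6),
    (0, 8), (1, 2), (1, 7), (2, 3), (2, 6), (3, 4), (3, 5), (3, 7), (3, 8), (4, 6), (5, 7),
    (6, 7)])

/-- The graph `G₁₀` of the structure theorem. -/
def graphG10 : SimpleGraph (Fin 9) :=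
  SimpleGraph.fromRel (fun a b => (a, b) ∈ [((0 : Fin 9), (1 : Fin 9)), (0, 4), (0, 5), (0, 6),
    (1, 2), (1, 7), (1, 8), (2, 3), (2, 6), (2, 8), (3, 4), (3, 5), (3, 7), (4, 6), (4, 8),
    (5, 7), (5, 8), (6, 7)])

/-! Two vertices of an induced five-cycle are never true twins of each other relative to the
cycle, whereas two vertices in the same part of a blow-up of `C₅` are. Hence an induced `C₅`
inside `A₁ ∪ ⋯ ∪ A₅` meets every `Aᵢ` exactly once, and a further vertex in some `Aᵢ` is a true
twin of a cycle vertex, i.e. it sees exactly three consecutive vertices of the cycle. A finite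
check shows that none of `G₄, …, G₁₀` contains this configuration. Vertices of `A₇` see nothing
in `A₁ ∪ ⋯ ∪ A₅`, so the vertices of `S ∖ D` with a neighbour in `D` lie in `A₆`, all of whose
vertices have the same neighbours in `A₁ ∪ ⋯ ∪ A₅`. -/

namespace SimpleGraph

variable {V W : Type*}

instance : DecidableRel cycle5.Adj := fun a b => decidable_of_iff _ (fromRel_adj _ a b).symm
instance : DecidableRel graphG4.Adj := fun a b => decidable_of_iff _ (fromRel_adj _ a b).symm
instance : DecidableRel graphG5.Adj := fun a b => decidable_of_iff _ (fromRel_adj _ a b).symm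
instance : DecidableRel graphG6.Adj := fun a b => decidable_of_iff _ (fromRel_adj _ a b).symm
instance : DecidableRel graphG7.Adj := fun a b => decidable_of_iff _ (fromRel_adj _ a b).symm
instance : DecidableRel graphG8.Adj := fun a b => decidable_of_iff _ (fromRel_adj _ a b).symm
instance : DecidableRel graphG9.Adj := fun a b => decidable_of_iff _ (fromRel_adj _ a b).symm
instance : DecidableRel graphG10.Adj := fun a b => decidable_of_iff _ (fromRel_adj _ a b).symm

theorem cycle5_exists_adj_ne_adj {k l : Fin 5} (hkl : k ≠ l) :
    ∃ m, m ≠ k ∧ m ≠ l ∧ ¬(cycle5.Adj k m ↔ cycle5.Adj l m) := by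
  revert k l; decide

/-- `w` is a true twin of `e k` relative to the induced five-cycle `e`. -/
def IsTwinOnC5 (H : SimpleGraph W) (e : cycle5 ↪g H) (w : W) (k : Fin 5) : Prop :=
  ∀ l, H.Adj w (e l) ↔ l = k ∨ cycle5.Adj k l

def IsC5TwinFree (H : SimpleGraph W) : Prop :=
  ∀ e w k, ¬IsTwinOnC5 H e w k

/-- The hypothesis says that no `w` is adjacent to exactly `v₄, v₀, v₁` on an induced cycle
`v₀ v₁ v₂ v₃ v₄`; its quantifiers are interleaved with adjacency guards so that `decide` only
walks along paths of `H`. -/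
theorem IsC5TwinFree.of_forall {n : ℕ} {H : SimpleGraph (Fin n)}
    (h : ∀ w v0, H.Adj w v0 → ∀ v1, H.Adj w v1 → H.Adj v0 v1 →
      ∀ v4, H.Adj w v4 → H.Adj v4 v0 → ¬H.Adj v1 v4 →
      ∀ v2, H.Adj v1 v2 → ¬H.Adj w v2 → ¬H.Adj v0 v2 → ¬H.Adj v2 v4 →
        ∀ v3, H.Adj v2 v3 → H.Adj v3 v4 → ¬H.Adj w v3 → ¬H.Adj v0 v3 → ¬H.Adj v1 v3 → False) :
    IsC5TwinFree H := by
  intro e w k hw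
  unfold IsTwinOnC5 at hw
  have hc : ∀ a b, H.Adj (e a) (e b) ↔ cycle5.Adj a b := fun _ _ => e.map_adj_iff
  refine h w (e k) ?_ (e (k + 1)) ?_ ?_ (e (k + 4)) ?_ ?_ ?_ (e (k + 2)) ?_ ?_ ?_ ?_
    (e (k + 3)) ?_ ?_ ?_ ?_ ?_ <;> simp only [hw, hc] <;> clear hw hc <;> revert k <;> decide

section

set_option synthInstance.maxSize 1000

theorem isC5TwinFree_graphG4 : IsC5TwinFree graphG4 := .of_forall (by decide)

theorem isC5TwinFree_graphG5 : IsC5TwinFree graphG5 := .of_forall (by decide)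

theorem isC5TwinFree_graphG6 : IsC5TwinFree graphG6 := .of_forall (by decide)

theorem isC5TwinFree_graphG7 : IsC5TwinFree graphG7 := .of_forall (by decide)

theorem isC5TwinFree_graphG8 : IsC5TwinFree graphG8 := .of_forall (by decide)

theorem isC5TwinFree_graphG9 : IsC5TwinFree graphG9 := .of_forall (by decide)

theorem isC5TwinFree_graphG10 : IsC5TwinFree graphG10 := .of_forall (by decide)

end

structure IsC5Blowup (G : SimpleGraph V) (A : Fin 5 → Set V) : Prop where
  isClique : ∀ a, G.IsClique (A a)
  complete : ∀ a, CompleteTo G (A a) (A (a + 1))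
  anticomplete : ∀ a, AnticompleteTo G (A a) (A (a + 2))

namespace IsC5Blowup

variable {G : SimpleGraph V} {A : Fin 5 → Set V}

theorem comap {H : SimpleGraph W} (ψ : H ↪g G) (hA : IsC5Blowup G A) :
    IsC5Blowup H (fun a => ψ ⁻¹' A a) where
  isClique a _ hx _ hy hxy := ψ.map_adj_iff.mp (hA.isClique a hx hy (ψ.injective.ne hxy))
  complete a _ hx _ hy := ψ.map_adj_iff.mp (hA.complete a _ hx _ hy)
  anticomplete a _ hx _ hy hxy := hA.anticomplete a _ hx _ hy (ψ.map_adj_iff.mpr hxy)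

theorem adj_iff (hA : IsC5Blowup G A) {x z : V} {a b : Fin 5} (hx : x ∈ A a) (hz : z ∈ A b)
    (hxz : x ≠ z) : G.Adj x z ↔ a = b ∨ cycle5.Adj a b := by
  obtain ⟨d, rfl⟩ : ∃ d, b = a + d := ⟨b - a, (add_sub_cancel a b).symm⟩
  have hpattern : ∀ a d : Fin 5, (a = a + d ∨ cycle5.Adj a (a + d)) ↔ d ≠ 2 ∧ d ≠ 3 := by
    decide
  rw [hpattern]
  obtain rfl | rfl | rfl | rfl | rfl : d = 0 ∨ d = 1 ∨ d = 2 ∨ d = 3 ∨ d = 4 := by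
    clear hz; revert d; decide
  · simpa using hA.isClique a hx (by simpa using hz) hxz
  · simpa using hA.complete a x hx z hz
  · simpa using hA.anticomplete a x hx z hz
  · have h : a + 3 + 2 = a := by rw [add_assoc]; exact add_zero a
    simpa using fun hxz' => hA.anticomplete (a + 3) z hz x (by rwa [h]) hxz'.symm
  · have h : a + 4 + 1 = a := by rw [add_assoc]; exact add_zero a
    simpa using (hA.complete (a + 4) z hz x (by rwa [h])).symm

theorem exists_isTwinOnC5 (hA : IsC5Blowup G A) (e : cycle5 ↪g G) (he : ∀ k, ∃ a, e k ∈ A a)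
    {w : V} {i : Fin 5} (hw : w ∈ A i) (hwe : w ∉ Set.range e) : ∃ k, IsTwinOnC5 G e w k := by
  choose σ hσ using he
  have hσ_adj : ∀ k l, k ≠ l → (cycle5.Adj k l ↔ σ k = σ l ∨ cycle5.Adj (σ k) (σ l)) :=
    fun k l hkl => e.map_adj_iff.symm.trans (hA.adj_iff (hσ k) (hσ l) (e.injective.ne hkl))
  have hσ_inj : σ.Injective := by
    intro k l hσkl
    by_contra hkl
    obtain ⟨m, hmk, hml, hm⟩ := cycle5_exists_adj_ne_adj hkl
    rw [hσ_adj k m hmk.symm, hσ_adj l m hml.symm, hσkl] at hm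
    exact hm Iff.rfl
  obtain ⟨k, rfl⟩ := Finite.injective_iff_surjective.mp hσ_inj i
  refine ⟨k, fun l => ?_⟩
  rw [hA.adj_iff hw (hσ l) fun h => hwe ⟨l, h.symm⟩]
  by_cases hlk : l = k
  · simp [hlk]
  · simp [hlk, ← hσ_adj k l (Ne.symm hlk)]

theorem notMem_of_induce_iso (hA : IsC5Blowup G A) {H : SimpleGraph W}
    (hTwinFree : IsC5TwinFree H) {S D : Set V} (f : H ≃g G.induce S)
    (g : cycle5 ≃g G.induce D) (hDS : D ⊆ S) (hD : ∀ x ∈ D, ∃ a, x ∈ A a)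
    {u : V} (huS : u ∈ S) (huD : u ∉ D) (i : Fin 5) : u ∉ A i := by
  intro hu
  let ψ : H ↪g G := f.toEmbedding.trans (Embedding.induce S)
  let e : cycle5 ↪g H :=
    g.toEmbedding.trans ((induceHomOfLE G hDS).trans f.symm.toEmbedding)
  have hψe : ∀ k, ψ (e k) = g k := by simp [ψ, e]
  have hψw : ψ (f.symm ⟨u, huS⟩) = u := by simp [ψ]
  have hwe : f.symm ⟨u, huS⟩ ∉ Set.range e := by
    rintro ⟨k, hk⟩
    have hgk := congrArg ψ hk
    rw [hψe, hψw] at hgk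
    exact huD (hgk ▸ (g k).2)
  obtain ⟨k, hk⟩ := (hA.comap ψ).exists_isTwinOnC5 e
    (fun k => by simpa [hψe] using hD _ (g k).2) (by simpa [hψw]) hwe
  exact hTwinFree e _ k hk

end IsC5Blowup

end SimpleGraph

theorem mem_union5_iff {V : Type*} {A1 A2 A3 A4 A5 : Set V} {x : V} :
    x ∈ A1 ∪ A2 ∪ A3 ∪ A4 ∪ A5 ↔ ∃ a, x ∈ ![A1, A2, A3, A4, A5] a := by
  simp [Fin.exists_fin_succ, or_assoc]

namespace HStarPart

variable {V : Type*} {G : SimpleGraph V} {A1 A2 A3 A4 A5 A6 A7 : Set V}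

theorem isC5Blowup (hH : HStarPart G A1 A2 A3 A4 A5 A6 A7) :
    IsC5Blowup G ![A1, A2, A3, A4, A5] where
  isClique a := by fin_cases a; exacts [hH.cl1, hH.cl2, hH.cl3, hH.cl4, hH.cl5]
  complete a := by fin_cases a; exacts [hH.c12, hH.c23, hH.c34, hH.c45, hH.c51]
  anticomplete a := by
    fin_cases a
    exacts [hH.a13, hH.a24, hH.a35, fun x hx y hy hxy => hH.a14 y hy x hx hxy.symm,
      fun x hx y hy hxy => hH.a25 y hy x hx hxy.symm]

theorem not_adj_of_mem_A7 (hH : HStarPart G A1 A2 A3 A4 A5 A6 A7) {u x : V} (hu : u ∈ A7)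
    (hx : x ∈ A1 ∪ A2 ∪ A3 ∪ A4 ∪ A5) : ¬G.Adj u x := by
  rcases hx with (((hx | hx) | hx) | hx) | hx
  exacts [hH.a71 u hu x hx, hH.a72 u hu x hx, hH.a73 u hu x hx, hH.a74 u hu x hx,
    hH.a75 u hu x hx]

theorem adj_iff_adj_of_mem_A6 (hH : HStarPart G A1 A2 A3 A4 A5 A6 A7) {u v x : V} (hu : u ∈ A6)
    (hv : v ∈ A6) (hx : x ∈ A1 ∪ A2 ∪ A3 ∪ A4 ∪ A5) : G.Adj u x ↔ G.Adj v x := by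
  rcases hx with (((hx | hx) | hx) | hx) | hx
  · exact iff_of_true (hH.c61 u hu x hx) (hH.c61 v hv x hx)
  · exact iff_of_false (hH.a62 u hu x hx) (hH.a62 v hv x hx)
  · exact iff_of_true (hH.c63 u hu x hx) (hH.c63 v hv x hx)
  · exact iff_of_true (hH.c64 u hu x hx) (hH.c64 v hv x hx)
  · exact iff_of_false (hH.a65 u hu x hx) (hH.a65 v hv x hx)

end HStarPart

theorem neighbours_of_C5_in_HStar_general {V : Type*} (G : SimpleGraph V)
    (A1 A2 A3 A4 A5 A6 A7 : Set V) (hH : HStarPart G A1 A2 A3 A4 A5 A6 A7)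
    (S : Set V)
    (hS : Nonempty (graphG4 ≃g G.induce S) ∨ Nonempty (graphG5 ≃g G.induce S) ∨
      Nonempty (graphG6 ≃g G.induce S) ∨ Nonempty (graphG7 ≃g G.induce S) ∨
      Nonempty (graphG8 ≃g G.induce S) ∨ Nonempty (graphG9 ≃g G.induce S) ∨
      Nonempty (graphG10 ≃g G.induce S))
    (D : Set V) (hDS : D ⊆ S) (hD : Nonempty (cycle5 ≃g G.induce D))
    (hD5 : D ⊆ A1 ∪ A2 ∪ A3 ∪ A4 ∪ A5) :
    (∀ u ∈ S \ D, (∃ d ∈ D, G.Adj u d) → u ∈ A6) ∧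
    (∀ u ∈ S \ D, ∀ v ∈ S \ D, (∃ d ∈ D, G.Adj u d) → (∃ d ∈ D, G.Adj v d) →
      ∀ d ∈ D, (G.Adj u d ↔ G.Adj v d)) := by
  obtain ⟨g⟩ := hD
  obtain ⟨n, H, hTwinFree, ⟨f⟩⟩ : ∃ (n : ℕ) (H : SimpleGraph (Fin n)),
      IsC5TwinFree H ∧ Nonempty (H ≃g G.induce S) := by
    rcases hS with hf | hf | hf | hf | hf | hf | hf
    exacts [⟨_, _, isC5TwinFree_graphG4, hf⟩, ⟨_, _, isC5TwinFree_graphG5, hf⟩,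
      ⟨_, _, isC5TwinFree_graphG6, hf⟩, ⟨_, _, isC5TwinFree_graphG7, hf⟩,
      ⟨_, _, isC5TwinFree_graphG8, hf⟩, ⟨_, _, isC5TwinFree_graphG9, hf⟩,
      ⟨_, _, isC5TwinFree_graphG10, hf⟩]
  have mem_A6 : ∀ u ∈ S \ D, (∃ d ∈ D, G.Adj u d) → u ∈ A6 := by
    rintro u ⟨huS, huD⟩ ⟨d, hd, hud⟩
    have hu : u ∈ A1 ∪ A2 ∪ A3 ∪ A4 ∪ A5 ∪ A6 ∪ A7 := by rw [hH.cover]; trivial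
    rcases hu with (hu | hu) | hu
    · obtain ⟨i, hi⟩ := mem_union5_iff.mp hu
      exact absurd hi <| hH.isC5Blowup.notMem_of_induce_iso hTwinFree f g hDS
        (fun x hx => mem_union5_iff.mp (hD5 hx)) huS huD i
    · exact hu
    · exact absurd hud (hH.not_adj_of_mem_A7 hu (hD5 hd))
  exact ⟨mem_A6, fun u hu v hv hun hvn d hd =>
    hH.adj_iff_adj_of_mem_A6 (mem_A6 u hu hun) (mem_A6 v hv hvn) (hD5 hd)⟩

/-- in a graph of `H*` (with `G[A₆]` being `P₄`-free), if `S` induces one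
of `G₄,…,G₁₀` and `D ⊆ S` induces a `C₅` with `D ⊆ A₁ ∪ ⋯ ∪ A₅`, then every vertex of
`S∖D` with a neighbour in `D` lies in `A₆`, and all such vertices have the same
neighbourhood in `D`. -/
theorem neighbours_of_C5_in_HStar {V : Type*} (G : SimpleGraph V)
    (A1 A2 A3 A4 A5 A6 A7 : Set V) (hH : HStarPart G A1 A2 A3 A4 A5 A6 A7)
    (hP5 : IndFree P5 G) (hgem : IndFree gem G) (hA6P4 : IndFree P4 (G.induce A6))
    (S : Set V)
    (hS : Nonempty (graphG4 ≃g G.induce S) ∨ Nonempty (graphG5 ≃g G.induce S) ∨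
      Nonempty (graphG6 ≃g G.induce S) ∨ Nonempty (graphG7 ≃g G.induce S) ∨
      Nonempty (graphG8 ≃g G.induce S) ∨ Nonempty (graphG9 ≃g G.induce S) ∨
      Nonempty (graphG10 ≃g G.induce S))
    (D : Set V) (hDS : D ⊆ S) (hD : Nonempty (cycle5 ≃g G.induce D))
    (hD5 : D ⊆ A1 ∪ A2 ∪ A3 ∪ A4 ∪ A5) :
    (∀ u ∈ S \ D, (∃ d ∈ D, G.Adj u d) → u ∈ A6) ∧
    (∀ u ∈ S \ D, ∀ v ∈ S \ D, (∃ d ∈ D, G.Adj u d) → (∃ d ∈ D, G.Adj v d) →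
      ∀ d ∈ D, (G.Adj u d ↔ G.Adj v d)) :=
  neighbours_of_C5_in_HStar_general G A1 A2 A3 A4 A5 A6 A7 hH S hS D hDS hD hD5
end

section
/- Let G be a (P_5, gem)-free graph that is k-vertex-critical. Then either G ≅ K_k, or every non-trivial module of G induces a clique; in particular, if G is a P_4-free expansion of one of the graphs G_1,…,G_10 from the Chudnovsky et al. structure theorem, then G is a clique expansion of that graph. -/
open SimpleGraph

/-- The graph `G₃` of the structure theorem. -/
def graphG3 : SimpleGraph (Fin 7) :=
  SimpleGraph.fromRel (fun a b => (a, b) ∈ [((0 : Fin 7), (1 : Fin 7)), (0, 4), (0, 5),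
    (1, 2), (1, 6), (2, 3), (2, 5), (3, 4), (3, 5), (3, 6)])

/-- `H` is isomorphic to one of the ten graphs `G₁,…,G₁₀` of the structure theorem
(`G₁` is the five-cycle). -/
def IsOneOfG1toG10 {W : Type*} (H : SimpleGraph W) : Prop :=
  Nonempty (H ≃g cycle5) ∨ Nonempty (H ≃g graphG2) ∨ Nonempty (H ≃g graphG3) ∨
    Nonempty (H ≃g graphG4) ∨ Nonempty (H ≃g graphG5) ∨ Nonempty (H ≃g graphG6) ∨
    Nonempty (H ≃g graphG7) ∨ Nonempty (H ≃g graphG8) ∨ Nonempty (H ≃g graphG9) ∨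
    Nonempty (H ≃g graphG10)


section AuxiliaryLemmas

universe u


def NoP4 {V : Type*} (G : SimpleGraph V) : Prop :=
  ∀ a b c d : V, G.Adj a b → G.Adj b c → G.Adj c d →
    ¬ G.Adj a c → ¬ G.Adj a d → ¬ G.Adj b d → False

lemma exists_maxIndep {V : Type*} [Fintype V] (G : SimpleGraph V) :
    ∃ I : Finset V, (∀ x ∈ I, ∀ y ∈ I, x ≠ y → ¬ G.Adj x y) ∧
      (∀ v ∉ I, ∃ u ∈ I, G.Adj v u) := by
  classical
  set P : Finset V → Prop := fun s => ∀ x ∈ s, ∀ y ∈ s, x ≠ y → ¬ G.Adj x y with hP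
  set S : Finset (Finset V) := Finset.univ.filter P with hS
  have hne : S.Nonempty := ⟨∅, by simp [hS, hP]⟩
  obtain ⟨I, hIS, hImax⟩ := S.exists_max_image Finset.card hne
  have hIind : P I := (Finset.mem_filter.mp hIS).2
  refine ⟨I, hIind, fun v hv => ?_⟩
  by_contra hno
  push_neg at hno
  have hins : P (insert v I) := by
    intro x hx y hy hxy
    rcases Finset.mem_insert.mp hx with hxv | hx'
    · rcases Finset.mem_insert.mp hy with hyv | hy'
      · exact absurd (hxv.trans hyv.symm) hxy
      · exact hxv ▸ hno y hy'
    · rcases Finset.mem_insert.mp hy with hyv | hy'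
      · exact fun h => hno x hx' (hyv ▸ h).symm
      · exact hIind x hx' y hy' hxy
  have : (insert v I).card ≤ I.card :=
    hImax _ (Finset.mem_filter.mpr ⟨Finset.mem_univ _, hins⟩)
  rw [Finset.card_insert_of_notMem hv] at this
  omega

lemma exists_maxClique {V : Type*} [Fintype V] (G : SimpleGraph V) (K : Finset V)
    (hK : G.IsClique K) :
    ∃ L : Finset V, K ⊆ L ∧ G.IsClique L ∧ ∀ v ∉ L, ¬ ∀ x ∈ L, G.Adj v x := by
  classical
  set P : Finset V → Prop := fun s => K ⊆ s ∧ G.IsClique s with hP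
  set S : Finset (Finset V) := Finset.univ.filter P with hS
  have hne : S.Nonempty := ⟨K, by simp [hS, hP, hK]⟩
  obtain ⟨L, hLS, hLmax⟩ := S.exists_max_image Finset.card hne
  obtain ⟨hKL, hLcl⟩ : P L := (Finset.mem_filter.mp hLS).2
  refine ⟨L, hKL, hLcl, fun v hv hall => ?_⟩
  have hins : P (insert v L) := by
    refine ⟨hKL.trans (Finset.subset_insert _ _), ?_⟩
    rw [Finset.coe_insert]
    exact hLcl.insert fun y hy hne => hall y hy
  have : (insert v L).card ≤ L.card :=
    hLmax _ (Finset.mem_filter.mpr ⟨Finset.mem_univ _, hins⟩)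
  rw [Finset.card_insert_of_notMem hv] at this
  omega

lemma clique_meets_indep {V : Type*} [Fintype V] {G : SimpleGraph V} (h4 : NoP4 G)
    {L I : Finset V} (hLcl : G.IsClique L) (hLmax : ∀ v ∉ L, ¬ ∀ x ∈ L, G.Adj v x)
    (hIind : ∀ x ∈ I, ∀ y ∈ I, x ≠ y → ¬ G.Adj x y)
    (hImax : ∀ v ∉ I, ∃ u ∈ I, G.Adj v u) (hLne : L.Nonempty) :
    ∃ x ∈ L, x ∈ I := by
  classical
  by_contra hdisj
  push_neg at hdisj
  -- every i ∈ I has a non-neighbor in L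
  have hnonnb : ∀ i ∈ I, ∃ k ∈ L, ¬ G.Adj i k := by
    intro i hi
    have : i ∉ L := fun h => hdisj i h hi
    have := hLmax i this
    push_neg at this
    obtain ⟨k, hk, hnk⟩ := this
    exact ⟨k, hk, hnk⟩
  -- every k ∈ L has a neighbor in I
  have hnb : ∀ k ∈ L, ∃ u ∈ I, G.Adj k u := fun k hk => hImax k (fun h => hdisj k hk h)
  -- I nonempty
  obtain ⟨k0, hk0⟩ := hLne
  obtain ⟨u0, hu0I, hu0⟩ := hnb k0 hk0
  set f : V → ℕ := fun i => (L.filter (fun k => G.Adj i k)).card with hf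
  obtain ⟨i1, hi1I, hi1max⟩ := I.exists_max_image f ⟨u0, hu0I⟩
  have hu0f : 0 < f u0 := by
    have hmem : k0 ∈ L.filter (fun k => G.Adj u0 k) := Finset.mem_filter.mpr ⟨hk0, hu0.symm⟩
    exact Finset.card_pos.mpr ⟨k0, hmem⟩
  have hf1 : 0 < f i1 := lt_of_lt_of_le hu0f (hi1max u0 hu0I)
  obtain ⟨k1', hk1'⟩ : (L.filter (fun k => G.Adj i1 k)).Nonempty := Finset.card_pos.mp hf1
  obtain ⟨k2, hk2L, hk2n⟩ := hnonnb i1 hi1I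
  obtain ⟨i2, hi2I, hi2a⟩ := hnb k2 hk2L
  -- find k1 ∈ filter i1 \ filter i2
  have hk2mem : k2 ∈ L.filter (fun k => G.Adj i2 k) := Finset.mem_filter.mpr ⟨hk2L, hi2a.symm⟩
  have hk2nmem : k2 ∉ L.filter (fun k => G.Adj i1 k) := fun h => hk2n (Finset.mem_filter.mp h).2
  have hex : ∃ k1 ∈ L.filter (fun k => G.Adj i1 k), k1 ∉ L.filter (fun k => G.Adj i2 k) := by
    by_contra hsub
    push_neg at hsub
    have hss : L.filter (fun k => G.Adj i1 k) ⊂ L.filter (fun k => G.Adj i2 k) :=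
      ⟨hsub, fun hcon => hk2nmem (hcon hk2mem)⟩
    have h1 := Finset.card_lt_card hss
    have h2 := hi1max i2 hi2I
    have e1 : f i1 = (L.filter (fun k => G.Adj i1 k)).card := rfl
    have e2 : f i2 = (L.filter (fun k => G.Adj i2 k)).card := rfl
    omega
  obtain ⟨k1, hk1m, hk1nm⟩ := hex
  obtain ⟨hk1L, hk1a⟩ := Finset.mem_filter.mp hk1m
  have hk1i2 : ¬ G.Adj i2 k1 := fun h => hk1nm (Finset.mem_filter.mpr ⟨hk1L, h⟩)
  have hne12 : i1 ≠ i2 := fun h => hk2n (h ▸ hi2a.symm)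
  have hk1k2 : k1 ≠ k2 := fun h => hk2nmem (h ▸ hk1m)
  -- P4 : i1 - k1 - k2 - i2
  exact h4 i1 k1 k2 i2 hk1a (hLcl hk1L hk2L hk1k2) hi2a
    (fun h => hk2n h) (hIind i1 hi1I i2 hi2I hne12) (fun h => hk1i2 h.symm)

lemma colorable_of_noP4 : ∀ (n : ℕ) {V : Type u} [Fintype V] (G : SimpleGraph V),
    NoP4 G → G.CliqueFree (n + 1) → G.Colorable n := by
  intro n
  induction n with
  | zero =>
    intro V _ G _ hcf
    exact ⟨⟨fun v => ((hcf {v}) ⟨by simp, by simp⟩).elim,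
      fun {u v} h => (hcf {u} ⟨by simp, by simp⟩).elim⟩⟩
  | succ n ih =>
    intro V _ G h4 hcf
    classical
    obtain ⟨I, hIind, hImax⟩ := exists_maxIndep G
    set S : Set V := {v | v ∉ I} with hSdef
    have h4' : NoP4 (G.induce S) := by
      intro a b c d hab hbc hcd hac had hbd
      exact h4 a b c d hab hbc hcd hac had hbd
    have hcf' : (G.induce S).CliqueFree (n + 1) := by
      intro s hs
      set K : Finset V := s.image Subtype.val with hKdef
      have hKcard : K.card = n + 1 := by
        rw [hKdef, Finset.card_image_of_injective _ Subtype.val_injective, hs.2]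
      have hKcl : G.IsClique K := by
        intro x hx y hy hxy
        simp only [hKdef, Finset.coe_image, Set.mem_image, Finset.mem_coe] at hx hy
        obtain ⟨x', hx', rfl⟩ := hx
        obtain ⟨y', hy', rfl⟩ := hy
        exact hs.1 hx' hy' (fun h => hxy (congrArg Subtype.val h))
      obtain ⟨L, hKL, hLcl, hLmax⟩ := exists_maxClique G K hKcl
      have hLne : L.Nonempty := by
        have : K.Nonempty := Finset.card_pos.mp (by omega)
        exact this.mono hKL
      obtain ⟨x, hxL, hxI⟩ := clique_meets_indep h4 hLcl hLmax hIind hImax hLne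
      have hxK : x ∉ K := by
        intro hx
        simp only [hKdef, Finset.mem_image] at hx
        obtain ⟨x', hx', rfl⟩ := hx
        exact x'.2 hxI
      have : G.IsNClique (n + 2) (insert x K) := by
        refine ⟨?_, by rw [Finset.card_insert_of_notMem hxK, hKcard]⟩
        have hsub : (insert x K : Finset V) ⊆ L := Finset.insert_subset hxL hKL
        exact hLcl.subset (by exact_mod_cast hsub)
      exact hcf _ this
    obtain ⟨c⟩ := ih (G.induce S) h4' hcf'
    refine ⟨⟨fun v => if h : v ∈ I then Fin.last n else (c ⟨v, h⟩).castSucc, ?_⟩⟩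
    intro u v huv
    intro h
    by_cases hu : u ∈ I <;> by_cases hv : v ∈ I
    · exact absurd huv (hIind u hu v hv huv.ne)
    · simp only [dif_pos hu, dif_neg hv] at h
      exact (Fin.castSucc_lt_last _).ne' h
    · simp only [dif_neg hu, dif_pos hv] at h
      exact (Fin.castSucc_lt_last _).ne h
    · simp only [dif_neg hu, dif_neg hv] at h
      exact c.valid (by exact huv : (G.induce S).Adj ⟨u, hu⟩ ⟨v, hv⟩) (Fin.castSucc_injective _ h)

lemma gem_pattern {V : Type*} {G : SimpleGraph V} (hgem : IndFree gem G)
    {a b c d e : V} (hab : G.Adj a b) (hbc : G.Adj b c) (hcd : G.Adj c d)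
    (hac : ¬ G.Adj a c) (had : ¬ G.Adj a d) (hbd : ¬ G.Adj b d)
    (hea : G.Adj e a) (heb : G.Adj e b) (hec : G.Adj e c) (hed : G.Adj e d) : False := by
  have hca : ¬ G.Adj c a := fun h => hac h.symm
  have hda : ¬ G.Adj d a := fun h => had h.symm
  have hdb : ¬ G.Adj d b := fun h => hbd h.symm
  have hae := hea.symm; have hbe := heb.symm; have hce := hec.symm; have hde := hed.symm
  have hba := hab.symm; have hcb := hbc.symm; have hdc := hcd.symm
  have nab : a ≠ b := hab.ne
  have nbc : b ≠ c := hbc.ne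
  have ncd : c ≠ d := hcd.ne
  have nac : a ≠ c := fun h => had (h ▸ hcd)
  have nad : a ≠ d := fun h => hac (h ▸ hdc)
  have nbd : b ≠ d := fun h => had (h ▸ hab)
  have nea : e ≠ a := hea.ne
  have neb : e ≠ b := heb.ne
  have nec : e ≠ c := hec.ne
  have ned : e ≠ d := hed.ne
  have nba := nab.symm; have ncb := nbc.symm; have ndc := ncd.symm
  have nca := nac.symm; have nda := nad.symm; have ndb := nbd.symm
  have nae := nea.symm; have nbe := neb.symm; have nce := nec.symm; have nde := ned.symm
  have hinj : Function.Injective (![a, b, c, d, e] : Fin 5 → V) := by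
    intro i j hij
    fin_cases i <;> fin_cases j <;> first | rfl | exact absurd hij (by assumption)
  have hpat : ∀ i j : Fin 5, gem.Adj i j → G.Adj (![a,b,c,d,e] i) (![a,b,c,d,e] j) := by
    intro i j h
    fin_cases i <;> fin_cases j <;>
      first
      | exact hab | exact hba | exact hbc | exact hcb | exact hcd | exact hdc
      | exact hea | exact hae | exact heb | exact hbe | exact hec | exact hce
      | exact hed | exact hde
      | simp [gem] at h
  have hpat' : ∀ i j : Fin 5, ¬ gem.Adj i j → i ≠ j →
      ¬ G.Adj (![a,b,c,d,e] i) (![a,b,c,d,e] j) := by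
    intro i j h hne
    fin_cases i <;> fin_cases j <;>
      first
      | exact hac | exact hca | exact had | exact hda | exact hbd | exact hdb
      | exact absurd rfl hne
      | (intro _; exact h (by simp [gem]))
  refine hgem ⟨Set.range ![a,b,c,d,e], ⟨⟨Equiv.ofInjective _ hinj, fun {i j} => ?_⟩⟩⟩
  constructor
  · intro h
    by_contra hg
    rcases eq_or_ne i j with rfl | hne
    · exact h.ne rfl
    · exact hpat' i j hg hne h
  · exact fun h => hpat i j h

lemma modules_clique {V : Type*} [Fintype V] (G : SimpleGraph V) (k : ℕ)
    (hgem : IndFree gem G) (hcrit : IsKVertexCritical G k)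
    {M : Set V} (hM : IsNontrivialModule G M) : G.IsClique M := by
  classical
  obtain ⟨hmod, h2, hlt⟩ := hM
  by_contra hnc
  rw [isClique_iff, Set.Pairwise] at hnc
  push_neg at hnc
  obtain ⟨x, hxM, y, hyM, hxy, hnadj⟩ := hnc
  have hcol : ∀ v : V, ∃ n : ℕ, n < k ∧ (G.induce {u | u ≠ v}).Colorable n := by
    intro v
    have hlt' := hcrit.2 v
    have hne : (G.induce {u | u ≠ v}).chromaticNumber ≠ ⊤ := ne_top_of_lt hlt'
    obtain ⟨n, hn⟩ := WithTop.ne_top_iff_exists.mp hne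
    refine ⟨n, ?_, chromaticNumber_le_iff_colorable.mp (le_of_eq hn.symm)⟩
    rw [← hn] at hlt'
    exact Nat.cast_lt.mp hlt'
  have hGnc : ∀ n : ℕ, n < k → ¬ G.Colorable n := by
    intro n hn hc
    have hle := hc.chromaticNumber_le
    rw [hcrit.1] at hle
    exact absurd (Nat.cast_le.mp hle) (Nat.not_le.mpr hn)
  have hMex : ∃ u, u ∉ M := by
    by_contra hcon; push_neg at hcon
    have huniv : M = Set.univ := Set.eq_univ_of_forall hcon
    rw [huniv, Set.ncard_univ] at hlt
    omega
  have hcompl : ∃ u, u ∉ M ∧ ∀ m ∈ M, G.Adj u m := by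
    by_contra hcon; push_neg at hcon
    have hanti : ∀ u, u ∉ M → ∀ m ∈ M, ¬ G.Adj u m := by
      intro u hu
      rcases hmod u hu with hc | ha
      · obtain ⟨m, hm, hnadj'⟩ := hcon u hu
        exact absurd (hc m hm) hnadj'
      · exact ha
    obtain ⟨u0, hu0⟩ := hMex
    obtain ⟨n1, hn1, ⟨c1⟩⟩ := hcol u0
    obtain ⟨n2, hn2, ⟨c2⟩⟩ := hcol x
    refine hGnc (max n1 n2) (max_lt hn1 hn2) ⟨⟨fun v =>
      if hv : v ∈ M then Fin.castLE (le_max_left n1 n2) (c1 ⟨v, fun h => hu0 (h ▸ hv)⟩)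
      else Fin.castLE (le_max_right n1 n2) (c2 ⟨v, fun h => hv (h ▸ hxM)⟩), ?_⟩⟩
    intro v w hvw h
    by_cases hv : v ∈ M <;> by_cases hw : w ∈ M
    · simp only [dif_pos hv, dif_pos hw] at h
      exact c1.valid (by exact hvw :
        (G.induce {u | u ≠ u0}).Adj ⟨v, fun h' => hu0 (h' ▸ hv)⟩ ⟨w, fun h' => hu0 (h' ▸ hw)⟩)
        (Fin.castLE_injective _ h)
    · exact hanti w hw v hv hvw.symm
    · exact hanti v hv w hw hvw
    · simp only [dif_neg hv, dif_neg hw] at h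
      exact c2.valid (by exact hvw :
        (G.induce {u | u ≠ x}).Adj ⟨v, fun h' => hv (h' ▸ hxM)⟩ ⟨w, fun h' => hw (h' ▸ hxM)⟩)
        (Fin.castLE_injective _ h)
  obtain ⟨u, huM, hucomp⟩ := hcompl
  letI : Fintype ↥M := Fintype.ofFinite _
  have h4 : NoP4 (G.induce M) := by
    intro a b c d hab hbc hcd hac had hbd
    exact gem_pattern hgem (hab : G.Adj a.1 b.1) (hbc : G.Adj b.1 c.1) (hcd : G.Adj c.1 d.1)
      (hac : ¬ G.Adj a.1 c.1) (had : ¬ G.Adj a.1 d.1) (hbd : ¬ G.Adj b.1 d.1)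
      (hucomp _ a.2) (hucomp _ b.2) (hucomp _ c.2) (hucomp _ d.2)
  set P : ℕ → Prop := fun n => ∃ s : Finset ↥M, (G.induce M).IsNClique n s with hPdef
  have hP0 : P 0 := ⟨∅, by constructor <;> simp⟩
  set ω := Nat.findGreatest P (Fintype.card ↥M) with hω
  have hPω : P ω := Nat.findGreatest_spec (Nat.zero_le _) hP0
  have hcf : (G.induce M).CliqueFree (ω + 1) := by
    intro s hs
    have hle : ω + 1 ≤ Fintype.card ↥M := by
      have hc := Finset.card_le_univ s
      rwa [hs.2] at hc
    have hωlt : Nat.findGreatest P (Fintype.card ↥M) < ω + 1 := by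
      rw [← hω]
      omega
    exact Nat.findGreatest_is_greatest hωlt hle ⟨s, hs⟩
  obtain ⟨d⟩ := colorable_of_noP4 ω (G.induce M) h4 hcf
  obtain ⟨K, hK⟩ := hPω
  have hvex : ∃ v : ↥M, v ∉ K := by
    by_contra hcon; push_neg at hcon
    exact hnadj (hK.1 (Finset.mem_coe.mpr (hcon ⟨x, hxM⟩)) (Finset.mem_coe.mpr (hcon ⟨y, hyM⟩))
      (fun h => hxy (congrArg Subtype.val h)))
  obtain ⟨v0, hv0K⟩ := hvex
  obtain ⟨n, hnk, ⟨c⟩⟩ := hcol v0.1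
  obtain ⟨w0, hw0M, hw0ne⟩ := Set.exists_ne_of_one_lt_ncard (s := M) (by omega) v0.1
  set cM : ↥M → Fin n := fun z => if hz : (z : V) = v0.1 then c ⟨w0, hw0ne⟩ else c ⟨z, hz⟩
    with hcM
  have hKv : ∀ z ∈ K, (z : ↥M) = z → (z : V) ≠ v0.1 := by
    intro z hz _ h
    exact hv0K (Subtype.ext h ▸ hz)
  have hKv' : ∀ z ∈ K, (z : V) ≠ v0.1 := fun z hz => hKv z hz rfl
  have hinjK : Set.InjOn cM ↑K := by
    intro z1 hz1 z2 hz2 heq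
    by_contra hne
    have hadj : (G.induce M).Adj z1 z2 := hK.1 hz1 hz2 hne
    rw [hcM] at heq
    simp only [dif_neg (hKv' z1 (Finset.mem_coe.mp hz1)), dif_neg (hKv' z2 (Finset.mem_coe.mp hz2))] at heq
    exact c.valid (by exact hadj : (G.induce {u | u ≠ v0.1}).Adj
      ⟨z1.1, hKv' z1 (Finset.mem_coe.mp hz1)⟩ ⟨z2.1, hKv' z2 (Finset.mem_coe.mp hz2)⟩) heq
  have hTcard : (K.image cM).card = ω := by
    rw [Finset.card_image_of_injOn hinjK, hK.2]
  set T := K.image cM with hT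
  have hcast : Fin ω ≃ ↥T := (finCongr hTcard.symm).trans T.equivFin.symm
  set f : Fin ω → Fin n := fun i => (hcast i).1 with hf
  have hfinj : Function.Injective f := fun i j h => hcast.injective (Subtype.ext h)
  have hfT : ∀ i, f i ∈ T := fun i => (hcast i).2
  have hvM : v0.1 ∈ M := v0.2
  refine hGnc n hnk ⟨⟨fun z =>
    if hz : z ∈ M then f (d ⟨z, hz⟩) else c ⟨z, fun h => hz (h ▸ hvM)⟩, ?_⟩⟩
  intro z w hzw h
  by_cases hz : z ∈ M <;> by_cases hw : w ∈ M
  · simp only [dif_pos hz, dif_pos hw] at h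
    exact d.valid (by exact hzw : (G.induce M).Adj ⟨z, hz⟩ ⟨w, hw⟩) (hfinj h)
  · simp only [dif_pos hz, dif_neg hw] at h
    obtain ⟨z', hz'K, hz'eq⟩ := Finset.mem_image.mp (hfT (d ⟨z, hz⟩))
    have hcompl' : ∀ m ∈ M, G.Adj w m := by
      rcases hmod w hw with hc | ha
      · exact hc
      · exact absurd hzw.symm (ha z hz)
    have hwz' : G.Adj w z'.1 := hcompl' z'.1 z'.2
    have hcv : c ⟨w, fun h' => hw (h' ▸ hvM)⟩ ≠ c ⟨z'.1, hKv' z' hz'K⟩ :=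
      c.valid (by exact hwz' : (G.induce {u | u ≠ v0.1}).Adj
        ⟨w, fun h' => hw (h' ▸ hvM)⟩ ⟨z'.1, hKv' z' hz'K⟩)
    rw [hcM] at hz'eq
    simp only [dif_neg (hKv' z' hz'K)] at hz'eq
    exact hcv (h.symm.trans hz'eq.symm)
  · simp only [dif_neg hz, dif_pos hw] at h
    obtain ⟨z', hz'K, hz'eq⟩ := Finset.mem_image.mp (hfT (d ⟨w, hw⟩))
    have hcompl' : ∀ m ∈ M, G.Adj z m := by
      rcases hmod z hz with hc | ha
      · exact hc
      · exact absurd hzw (ha w hw)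
    have hzz' : G.Adj z z'.1 := hcompl' z'.1 z'.2
    have hcv : c ⟨z, fun h' => hz (h' ▸ hvM)⟩ ≠ c ⟨z'.1, hKv' z' hz'K⟩ :=
      c.valid (by exact hzz' : (G.induce {u | u ≠ v0.1}).Adj
        ⟨z, fun h' => hz (h' ▸ hvM)⟩ ⟨z'.1, hKv' z' hz'K⟩)
    rw [hcM] at hz'eq
    simp only [dif_neg (hKv' z' hz'K)] at hz'eq
    exact hcv (h.trans hz'eq.symm)
  · simp only [dif_neg hz, dif_neg hw] at h
    exact c.valid (by exact hzw : (G.induce {u | u ≠ v0.1}).Adj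
      ⟨z, fun h' => hz (h' ▸ hvM)⟩ ⟨w, fun h' => hw (h' ▸ hvM)⟩) h

lemma exists_ne_of_equiv_fin {W : Type*} {m : ℕ} (e : W ≃ Fin (m + 2)) (w : W) :
    ∃ w' : W, w' ≠ w := by
  by_cases h : e w = 0
  · exact ⟨e.symm 1, fun hc => by simp [← hc, h] at *⟩
  · exact ⟨e.symm 0, fun hc => h (by rw [← hc, Equiv.apply_symm_apply])⟩

end AuxiliaryLemmas

/-- a `k`-vertex-critical (P₅, gem)-free graph is `K_k` or all its
non-trivial modules induce cliques; in particular, every `P₄`-free expansion of one of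
`G₁,…,G₁₀` that is `k`-vertex-critical is a clique expansion. -/
theorem critical_P5gem_modules_are_cliques {V : Type*} [Fintype V] (G : SimpleGraph V)
    (k : ℕ) (hP5 : IndFree P5 G) (hgem : IndFree gem G) (hcrit : IsKVertexCritical G k) :
    (Nonempty (G ≃g (⊤ : SimpleGraph (Fin k))) ∨
      ∀ M : Set V, IsNontrivialModule G M → G.IsClique M) ∧
    (∀ (W : Type) (H : SimpleGraph W) (Q : W → Set V), IsOneOfG1toG10 H →
      IsExpansion G H Q → (∀ w, IndFree P4 (G.induce (Q w))) → ∀ w, G.IsClique (Q w)) := by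
  classical
  have KEY : ∀ M : Set V, IsNontrivialModule G M → G.IsClique M :=
    fun M hM => modules_clique G k hgem hcrit hM
  refine ⟨Or.inr KEY, ?_⟩
  intro W H Q hone hexp _ w
  have hQmod : IsModule G (Q w) := by
    intro v hv
    obtain ⟨w', hw'⟩ := hexp.2.2.1 v
    have hne : w' ≠ w := fun h => hv (h ▸ hw')
    by_cases hadj : H.Adj w' w
    · exact Or.inl (fun m hm => hexp.2.2.2.1 w' w hadj v hw' m hm)
    · exact Or.inr (fun m hm => hexp.2.2.2.2 w' w hne hadj v hw' m hm)
  by_cases h2 : 2 ≤ (Q w).ncard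
  · -- nontrivial module
    have hW2 : ∃ w'' : W, w'' ≠ w := by
      rcases hone with he|he|he|he|he|he|he|he|he|he <;> obtain ⟨e⟩ := he <;>
        exact exists_ne_of_equiv_fin e.toEquiv w
    obtain ⟨w'', hw''⟩ := hW2
    obtain ⟨x, hx⟩ := hexp.1 w''
    have hxQ : x ∉ Q w := fun hc =>
      Set.disjoint_left.mp (hexp.2.1 hw'') hx hc
    have hss : Q w ⊂ Set.univ := ⟨Set.subset_univ _, fun hc => hxQ (hc (Set.mem_univ x))⟩
    have hlt : (Q w).ncard < Nat.card V := by
      rw [← Set.ncard_univ]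
      exact Set.ncard_lt_ncard hss (Set.finite_univ)
    exact KEY (Q w) ⟨hQmod, h2, hlt⟩
  · -- small part is a clique
    intro a ha b hb hab
    exfalso
    apply h2
    have : 1 < (Q w).ncard := Set.one_lt_ncard_iff (Set.toFinite _) |>.mpr ⟨a, b, ha, hb, hab⟩
    omega
end

section
/- Let G ∈ H* with parts A_1,…,A_7 and suppose that |A_1|=|A_3|=|A_4|=a with a ≥ 2, |A_2|=|A_5|=q−a where q = ω(G) = k−1, and suppose G is k-vertex-critical. Then for any vertex x_5 ∈ A_5, there is no proper k-colouring of G in which x_5 is the only vertex receiving colour k. (Hence no such k-vertex-critical graph exists with a ≥ 2 and ω(G)=k−1 under these cardinality constraints.) -/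
open SimpleGraph

/-- if `G ∈ H*` is `k`-vertex-critical with `ω(G) = k − 1`,
`|A₁| = |A₃| = |A₄| = a ≥ 2` and `|A₂| = |A₅| = ω(G) − a`, then no proper
`k`-colouring (with colours `1,…,k`) of `G` has a vertex `x₅ ∈ A₅` as the unique
vertex of colour `k`. -/
theorem no_special_colouring_in_HStar {V : Type*} [Fintype V] (G : SimpleGraph V)
    (A1 A2 A3 A4 A5 A6 A7 : Set V) (hH : HStarPart G A1 A2 A3 A4 A5 A6 A7)
    (hP5 : IndFree P5 G) (hgem : IndFree gem G)
    (k a : ℕ) (ha : 2 ≤ a)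
    (h1 : A1.ncard = a) (h3 : A3.ncard = a) (h4 : A4.ncard = a)
    (h2 : A2.ncard = cliqueNum' G - a) (h5 : A5.ncard = cliqueNum' G - a)
    (hq : cliqueNum' G = k - 1)
    (hcrit : IsKVertexCritical G k) :
    ∀ x5 ∈ A5, ¬ ∃ c : V → ℕ,
      (∀ u v : V, G.Adj u v → c u ≠ c v) ∧
      (∀ v : V, c v ∈ Finset.Icc 1 k) ∧
      (∀ v : V, c v = k ↔ v = x5) := by
  classical
  rintro x5 hx5 ⟨c, hprop, hrange, huniq⟩
  set q := cliqueNum' G with hqdef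
  -- extract the disjointness facts we need from the pairwise-disjoint list
  have hp := hH.pdisj
  simp only [List.pairwise_cons, List.mem_cons, List.not_mem_nil, List.mem_singleton,
    forall_eq_or_imp, forall_eq, List.Pairwise.nil] at hp
  have d25 : Disjoint A2 A5 := hp.2.1.2.2.1
  have d35 : Disjoint A3 A5 := hp.2.2.1.2.1
  -- basic arithmetic facts
  have hq1 : a + 1 ≤ q := by
    have : 0 < A5.ncard := (Set.ncard_pos (Set.toFinite A5)).mpr hH.ne5
    omega
  have hk : k = q + 1 := by omega
  -- colours of vertices other than x5 lie in {1,…,q}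
  have hcol : ∀ v : V, v ≠ x5 → c v ∈ Finset.Icc 1 q := by
    intro v hv
    have h1 := hrange v
    have h2 : c v ≠ k := fun h => hv ((huniq v).mp h)
    simp only [Finset.mem_Icc] at h1 ⊢
    omega
  -- the colour sets of the cliques
  let F : Set V → Finset ℕ := fun S => (Set.toFinite S).toFinset.image c
  have hcard : ∀ S : Set V, G.IsClique S → (F S).card = S.ncard := by
    intro S hS
    rw [Finset.card_image_of_injOn, Set.ncard_eq_toFinset_card _ (Set.toFinite S)]
    intro u hu v hv huv
    by_contra hne
    exact hprop u v (hS (by simpa using hu) (by simpa using hv) hne) huv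
  have hmemF : ∀ (S : Set V) (n : ℕ), n ∈ F S ↔ ∃ v ∈ S, c v = n := by
    intro S n
    simp only [F, Finset.mem_image, Set.Finite.mem_toFinset]
  have hdisjF : ∀ S T : Set V, CompleteTo G S T → Disjoint (F S) (F T) := by
    intro S T hST
    rw [Finset.disjoint_left]
    intro n hnS hnT
    obtain ⟨u, hu, hcu⟩ := (hmemF S n).mp hnS
    obtain ⟨v, hv, hcv⟩ := (hmemF T n).mp hnT
    exact hprop u v (hST u hu v hv) (hcu.trans hcv.symm)
  set I : Finset ℕ := Finset.Icc 1 q with hIdef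
  have hIcard : I.card = q := by simp [hIdef]
  have hsubI : ∀ S : Set V, (∀ v ∈ S, v ≠ x5) → F S ⊆ I := by
    intro S hS n hn
    obtain ⟨v, hv, hcv⟩ := (hmemF S n).mp hn
    exact hcv ▸ hcol v (hS v hv)
  -- the five colour sets
  have hS1I : F A1 ⊆ I := hsubI A1 fun v hv h =>
    G.irrefl (h ▸ hH.c51 x5 hx5 v hv)
  have hS2I : F A2 ⊆ I := hsubI A2 fun v hv h =>
    (Set.disjoint_left.mp d25 hv) (h ▸ hx5)
  have hS3I : F A3 ⊆ I := hsubI A3 fun v hv h =>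
    (Set.disjoint_left.mp d35 hv) (h ▸ hx5)
  have hS4I : F A4 ⊆ I := hsubI A4 fun v hv h =>
    G.irrefl (h ▸ hH.c45 v hv x5 hx5)
  have hS5I : F (A5 \ {x5}) ⊆ I := hsubI _ fun v hv => hv.2
  have hc1 : (F A1).card = a := by rw [hcard A1 hH.cl1, h1]
  have hc2 : (F A2).card = q - a := by rw [hcard A2 hH.cl2, h2]
  have hc3 : (F A3).card = a := by rw [hcard A3 hH.cl3, h3]
  have hc4 : (F A4).card = a := by rw [hcard A4 hH.cl4, h4]
  have hc5 : (F (A5 \ {x5})).card = q - a - 1 := by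
    rw [hcard _ (hH.cl5.subset Set.diff_subset),
      Set.ncard_diff_singleton_of_mem hx5, h5]
  -- disjointness of colour sets along complete pairs
  have hd12 : Disjoint (F A1) (F A2) := hdisjF A1 A2 hH.c12
  have hd23 : Disjoint (F A2) (F A3) := hdisjF A2 A3 hH.c23
  have hd34 : Disjoint (F A3) (F A4) := hdisjF A3 A4 hH.c34
  have hd45 : Disjoint (F A4) (F (A5 \ {x5})) := by
    have := hdisjF A4 A5 hH.c45
    exact this.mono_right (by
      intro n hn
      obtain ⟨v, hv, hcv⟩ := (hmemF _ n).mp hn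
      exact (hmemF A5 n).mpr ⟨v, hv.1, hcv⟩)
  have hd51 : Disjoint (F (A5 \ {x5})) (F A1) := by
    have := hdisjF A5 A1 hH.c51
    exact this.mono_left (by
      intro n hn
      obtain ⟨v, hv, hcv⟩ := (hmemF _ n).mp hn
      exact (hmemF A5 n).mpr ⟨v, hv.1, hcv⟩)
  -- S2 = I \ S1, hence S3 = S1, hence S4 is disjoint from S1
  have hS2eq : F A2 = I \ F A1 := by
    apply Finset.eq_of_subset_of_card_le
    · intro n hn
      exact Finset.mem_sdiff.mpr ⟨hS2I hn, fun h => Finset.disjoint_left.mp hd12 h hn⟩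
    · rw [Finset.card_sdiff_of_subset hS1I, hIcard, hc1, hc2]
  have hS3sub : F A3 ⊆ F A1 := by
    intro n hn
    have hns : n ∈ I \ F A2 :=
      Finset.mem_sdiff.mpr ⟨hS3I hn, fun h => Finset.disjoint_left.mp hd23 h hn⟩
    rw [hS2eq, Finset.sdiff_sdiff_self_left] at hns
    exact (Finset.mem_inter.mp hns).2
  have hS3eq : F A3 = F A1 :=
    Finset.eq_of_subset_of_card_le hS3sub (by rw [hc1, hc3])
  have hd14 : Disjoint (F A1) (F A4) := hS3eq ▸ hd34
  -- final count: S1 ∪ S4 ∪ S5' ⊆ I with |S1|+|S4|+|S5'| = q + a − 1 > q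
  have hU : (F A1 ∪ F A4 ∪ F (A5 \ {x5})).card ≤ q := by
    rw [← hIcard]
    exact Finset.card_le_card (Finset.union_subset (Finset.union_subset hS1I hS4I) hS5I)
  rw [Finset.card_union_of_disjoint (by
        rw [Finset.disjoint_union_left]
        exact ⟨hd51.symm, hd45⟩),
      Finset.card_union_of_disjoint hd14, hc1, hc4, hc5] at hU
  omega
end
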